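/- arXiv:2009.09641 — 4 statements merged into one kernel-verified Lean document; each statement's English description precedes it below -/
import Mathlib

section
/- Let g > 0 and D > 0, and let η, u : ℝ × ℝ → ℝ be a smooth solution of the BBM-BBM system η_t + ((D+η)u)_x − (D²/6)η_{xxt} = 0, u_t + g η_x + u u_x − (D²/6)u_{xxt} = 0 on ℝ × [0,T]. Assume that all partial derivatives of η and u of order at most 3 are, for each t ∈ [0,T], integrable in x with an integrable dominating function that is locally uniform in t, and that they, together with the products η u, η_x u_x, tend to 0 as |x| → ∞. Then the impulse functional H(t) = ∫_ℝ ( η u + (D²/6) η_x u_x ) dx is constant in t, i.e. dH/dt = 0 on [0,T]. -/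
open MeasureTheory Filter Set

set_option maxHeartbeats 1000000

/-- Partial derivative with respect to the first (spatial) variable. -/
noncomputable def pdx (f : ℝ → ℝ → ℝ) : ℝ → ℝ → ℝ := fun x t => deriv (fun y => f y t) x

/-- Partial derivative with respect to the second (temporal) variable. -/
noncomputable def pdt (f : ℝ → ℝ → ℝ) : ℝ → ℝ → ℝ := fun x t => deriv (fun s => f x s) t

/-- Iterated spatial partial derivative. -/
noncomputable def pdxn : ℕ → (ℝ → ℝ → ℝ) → (ℝ → ℝ → ℝ)
  | 0, f => f
  | n + 1, f => pdx (pdxn n f)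

/-- Iterated temporal partial derivative. -/
noncomputable def pdtn : ℕ → (ℝ → ℝ → ℝ) → (ℝ → ℝ → ℝ)
  | 0, f => f
  | n + 1, f => pdt (pdtn n f)

/-- `(η, u)` solves the BBM-BBM system with gravity `g` and depth `D` on `ℝ × [0, T]`:
`η_t + ((D+η)u)_x − (D²/6)η_{xxt} = 0`, `u_t + g η_x + u u_x − (D²/6)u_{xxt} = 0`. -/
def IsBBMSolution (g D T : ℝ) (η u : ℝ → ℝ → ℝ) : Prop :=
  ∀ x : ℝ, ∀ t ∈ Set.Icc (0 : ℝ) T,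
    pdt η x t + pdx (fun y s => (D + η y s) * u y s) x t
      - D ^ 2 / 6 * pdt (pdx (pdx η)) x t = 0 ∧
    pdt u x t + g * pdx η x t + u x t * pdx u x t
      - D ^ 2 / 6 * pdt (pdx (pdx u)) x t = 0

section AuxBBM

variable {f : ℝ → ℝ → ℝ}

lemma BBMaux.hasDerivAt_pair_x (x t : ℝ) :
    HasDerivAt (fun y : ℝ => (y, t)) ((1:ℝ), (0:ℝ)) x :=
  (hasDerivAt_id x).prodMk (hasDerivAt_const x t)

lemma BBMaux.hasDerivAt_pair_t (x t : ℝ) :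
    HasDerivAt (fun s : ℝ => (x, s)) ((0:ℝ), (1:ℝ)) t :=
  (hasDerivAt_const t x).prodMk (hasDerivAt_id t)

lemma BBMaux.hasDerivAt_x (hf : ContDiff ℝ (⊤ : ℕ∞) fun p : ℝ × ℝ => f p.1 p.2) (x t : ℝ) :
    HasDerivAt (fun y => f y t) (pdx f x t) x := by
  have h := ((hf.differentiable (by simp)) (x, t)).hasFDerivAt.comp_hasDerivAt x
    (BBMaux.hasDerivAt_pair_x x t)
  have : pdx f x t = fderiv ℝ (fun p : ℝ × ℝ => f p.1 p.2) (x, t) (1, 0) := h.deriv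
  rw [this]; exact h

lemma BBMaux.hasDerivAt_t (hf : ContDiff ℝ (⊤ : ℕ∞) fun p : ℝ × ℝ => f p.1 p.2) (x t : ℝ) :
    HasDerivAt (fun s => f x s) (pdt f x t) t := by
  have h := ((hf.differentiable (by simp)) (x, t)).hasFDerivAt.comp_hasDerivAt t
    (BBMaux.hasDerivAt_pair_t x t)
  have : pdt f x t = fderiv ℝ (fun p : ℝ × ℝ => f p.1 p.2) (x, t) (0, 1) := h.deriv
  rw [this]; exact h

lemma BBMaux.pdx_eq (hf : ContDiff ℝ (⊤ : ℕ∞) fun p : ℝ × ℝ => f p.1 p.2) (x t : ℝ) :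
    pdx f x t = fderiv ℝ (fun p : ℝ × ℝ => f p.1 p.2) (x, t) (1, 0) := by
  have h := ((hf.differentiable (by simp)) (x, t)).hasFDerivAt.comp_hasDerivAt x
    (BBMaux.hasDerivAt_pair_x x t)
  exact h.deriv

lemma BBMaux.pdt_eq (hf : ContDiff ℝ (⊤ : ℕ∞) fun p : ℝ × ℝ => f p.1 p.2) (x t : ℝ) :
    pdt f x t = fderiv ℝ (fun p : ℝ × ℝ => f p.1 p.2) (x, t) (0, 1) :=
  (((hf.differentiable (by simp)) (x, t)).hasFDerivAt.comp_hasDerivAt t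
    (BBMaux.hasDerivAt_pair_t x t)).deriv

lemma BBMaux.contDiff_fderiv_apply (hf : ContDiff ℝ (⊤ : ℕ∞) fun p : ℝ × ℝ => f p.1 p.2) (v : ℝ × ℝ) :
    ContDiff ℝ (⊤ : ℕ∞) (fun p : ℝ × ℝ => fderiv ℝ (fun p : ℝ × ℝ => f p.1 p.2) p v) :=
  (ContinuousLinearMap.apply ℝ ℝ v).contDiff.comp (hf.fderiv_right (by simp))

lemma BBMaux.contDiff_pdx (hf : ContDiff ℝ (⊤ : ℕ∞) fun p : ℝ × ℝ => f p.1 p.2) :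
    ContDiff ℝ (⊤ : ℕ∞) (fun p : ℝ × ℝ => pdx f p.1 p.2) := by
  have h := BBMaux.contDiff_fderiv_apply hf (1, 0)
  have e : (fun p : ℝ × ℝ => pdx f p.1 p.2)
      = fun p : ℝ × ℝ => fderiv ℝ (fun p : ℝ × ℝ => f p.1 p.2) p (1, 0) := by
    funext p; exact BBMaux.pdx_eq hf p.1 p.2
  rw [e]; exact h

lemma BBMaux.contDiff_pdt (hf : ContDiff ℝ (⊤ : ℕ∞) fun p : ℝ × ℝ => f p.1 p.2) :
    ContDiff ℝ (⊤ : ℕ∞) (fun p : ℝ × ℝ => pdt f p.1 p.2) := by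
  have h := BBMaux.contDiff_fderiv_apply hf (0, 1)
  have e : (fun p : ℝ × ℝ => pdt f p.1 p.2)
      = fun p : ℝ × ℝ => fderiv ℝ (fun p : ℝ × ℝ => f p.1 p.2) p (0, 1) := by
    funext p; exact BBMaux.pdt_eq hf p.1 p.2
  rw [e]; exact h

lemma BBMaux.clairaut (hf : ContDiff ℝ (⊤ : ℕ∞) fun p : ℝ × ℝ => f p.1 p.2) (x t : ℝ) :
    pdx (pdt f) x t = pdt (pdx f) x t := by
  set F := fun p : ℝ × ℝ => f p.1 p.2 with hF
  have hdF : ∀ p : ℝ × ℝ, HasFDerivAt F (fderiv ℝ F p) p :=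
    fun p => ((hf.differentiable (by simp)) p).hasFDerivAt
  have hd2 : HasFDerivAt (fderiv ℝ F) (fderiv ℝ (fderiv ℝ F) (x, t)) (x, t) :=
    (((hf.fderiv_right (m := (⊤ : ℕ∞)) (by simp)).differentiable (by simp)) (x, t)).hasFDerivAt
  have hsymm := second_derivative_symmetric hdF hd2
  have h1 : ∀ v : ℝ × ℝ, HasFDerivAt (fun p => fderiv ℝ F p v)
      ((ContinuousLinearMap.apply ℝ ℝ v).comp (fderiv ℝ (fderiv ℝ F) (x, t))) (x, t) :=
    fun v => (ContinuousLinearMap.apply ℝ ℝ v).hasFDerivAt.comp _ hd2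
  have ex : pdx (pdt f) x t = fderiv ℝ (fderiv ℝ F) (x, t) (1, 0) (0, 1) := by
    have heq : (fun y => pdt f y t) = fun y => fderiv ℝ F (y, t) (0, 1) := by
      funext y; exact BBMaux.pdt_eq hf y t
    have hd : HasDerivAt (fun y => fderiv ℝ F (y, t) (0, 1))
        (fderiv ℝ (fderiv ℝ F) (x, t) (1, 0) (0, 1)) x :=
      by have h := (h1 (0, 1)).comp_hasDerivAt x (BBMaux.hasDerivAt_pair_x x t); exact h
    have : pdx (pdt f) x t = deriv (fun y => fderiv ℝ F (y, t) (0, 1)) x := by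
      simp only [pdx, heq]
    rw [this, hd.deriv]
  have et : pdt (pdx f) x t = fderiv ℝ (fderiv ℝ F) (x, t) (0, 1) (1, 0) := by
    have heq : (fun s => pdx f x s) = fun s => fderiv ℝ F (x, s) (1, 0) := by
      funext s; exact BBMaux.pdx_eq hf x s
    have hd : HasDerivAt (fun s => fderiv ℝ F (x, s) (1, 0))
        (fderiv ℝ (fderiv ℝ F) (x, t) (0, 1) (1, 0)) t :=
      by have h := (h1 (1, 0)).comp_hasDerivAt t (BBMaux.hasDerivAt_pair_t x t); exact h
    have : pdt (pdx f) x t = deriv (fun s => fderiv ℝ F (x, s) (1, 0)) t := by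
      simp only [pdt, heq]
    rw [this, hd.deriv]
  rw [ex, et, hsymm]

lemma BBMaux.contDiff_pdtn (hf : ContDiff ℝ (⊤ : ℕ∞) fun p : ℝ × ℝ => f p.1 p.2) (j : ℕ) :
    ContDiff ℝ (⊤ : ℕ∞) (fun p : ℝ × ℝ => pdtn j f p.1 p.2) := by
  induction j with
  | zero => exact hf
  | succ n ih => exact BBMaux.contDiff_pdt ih

lemma BBMaux.contDiff_pdxn_pdtn (hf : ContDiff ℝ (⊤ : ℕ∞) fun p : ℝ × ℝ => f p.1 p.2) (i j : ℕ) :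
    ContDiff ℝ (⊤ : ℕ∞) (fun p : ℝ × ℝ => pdxn i (pdtn j f) p.1 p.2) := by
  induction i with
  | zero => exact BBMaux.contDiff_pdtn hf j
  | succ n ih => exact BBMaux.contDiff_pdx ih

lemma BBMaux.integral_deriv_eq_zero (G G' : ℝ → ℝ) (hd : ∀ x, HasDerivAt G (G' x) x)
    (hi : Integrable G') (h0 : Tendsto G (cocompact ℝ) (nhds 0)) :
    ∫ x, G' x = 0 := by
  have hcc : Tendsto G atTop (nhds 0) ∧ Tendsto G atBot (nhds 0) := by
    rw [cocompact_eq_atBot_atTop] at h0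
    exact ⟨h0.mono_left le_sup_right, h0.mono_left le_sup_left⟩
  have h1 : ∫ x in Set.Ioi (0:ℝ), G' x = 0 - G 0 :=
    MeasureTheory.integral_Ioi_of_hasDerivAt_of_tendsto' (fun x _ => hd x)
      hi.integrableOn hcc.1
  have h2 : ∫ x in Set.Iic (0:ℝ), G' x = G 0 - 0 :=
    MeasureTheory.integral_Iic_of_hasDerivAt_of_tendsto' (fun x _ => hd x)
      hi.integrableOn hcc.2
  rw [← intervalIntegral.integral_Iic_add_Ioi (b := (0:ℝ)) hi.integrableOn hi.integrableOn,
    h1, h2]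
  ring

lemma BBMaux.abs_le_integral_of_deriv (F F' φ : ℝ → ℝ) (hd : ∀ y, HasDerivAt F (F' y) y)
    (hi : Integrable F') (h0 : Tendsto F atTop (nhds 0))
    (hφ : ∀ y, |F' y| ≤ φ y) (hφi : Integrable φ) (x : ℝ) :
    |F x| ≤ ∫ y, φ y := by
  have h1 : ∫ y in Set.Ioi x, F' y = 0 - F x :=
    MeasureTheory.integral_Ioi_of_hasDerivAt_of_tendsto' (fun y _ => hd y)
      hi.integrableOn h0
  have h2 : |F x| = |∫ y in Set.Ioi x, F' y| := by rw [h1]; simp [abs_sub_comm]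
  rw [h2]
  calc |∫ y in Set.Ioi x, F' y| ≤ ∫ y in Set.Ioi x, |F' y| := by
        simpa using norm_integral_le_integral_norm (μ := volume.restrict (Set.Ioi x)) F'
    _ ≤ ∫ y in Set.Ioi x, φ y :=
        MeasureTheory.integral_mono hi.abs.integrableOn hφi.integrableOn hφ
    _ ≤ ∫ y, φ y := by
        apply MeasureTheory.setIntegral_le_integral hφi
        filter_upwards with y
        exact le_trans (abs_nonneg _) (hφ y)

lemma BBMaux.integrable_mul_bdd {a b : ℝ → ℝ} (ha : Integrable a) (hb : Continuous b)
    {C : ℝ} (hC : ∀ x, |b x| ≤ C) : Integrable (fun x => a x * b x) := by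
  have h := ha.bdd_mul (c := C) hb.aestronglyMeasurable (ae_of_all _ fun x => by simpa using hC x)
  simpa [mul_comm] using h

lemma BBMaux.integrable_bdd_mul {a b : ℝ → ℝ} (ha : Integrable a) (hb : Continuous b)
    {C : ℝ} (hC : ∀ x, |b x| ≤ C) : Integrable (fun x => b x * a x) :=
  ha.bdd_mul (c := C) hb.aestronglyMeasurable (ae_of_all _ fun x => by simpa using hC x)

end AuxBBM

/-- Conservation of the impulse functional
`H(t) = ∫_ℝ ( η u + (D²/6) η_x u_x ) dx` for the Cauchy problem of the BBM-BBM system. -/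
theorem impulse_conservation_cauchy_bbm
    (g D T : ℝ) (hg : 0 < g) (hD : 0 < D)
    (η u : ℝ → ℝ → ℝ)
    (hη : ContDiff ℝ (⊤ : ℕ∞) (fun p : ℝ × ℝ => η p.1 p.2))
    (hu : ContDiff ℝ (⊤ : ℕ∞) (fun p : ℝ × ℝ => u p.1 p.2))
    (hsol : IsBBMSolution g D T η u)
    (hInt : ∀ f ∈ ({η, u} : Set (ℝ → ℝ → ℝ)), ∀ i j : ℕ, i + j ≤ 3 →
      ∀ t ∈ Set.Icc (0 : ℝ) T, Integrable (fun x => pdxn i (pdtn j f) x t))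
    (hDom : ∀ f ∈ ({η, u} : Set (ℝ → ℝ → ℝ)), ∀ i j : ℕ, i + j ≤ 3 →
      ∀ t₀ ∈ Set.Icc (0 : ℝ) T, ∃ ε > (0 : ℝ), ∃ φ : ℝ → ℝ, Integrable φ ∧
        ∀ t ∈ Set.Icc (0 : ℝ) T, |t - t₀| < ε →
          ∀ x : ℝ, |pdxn i (pdtn j f) x t| ≤ φ x)
    (hDecay : ∀ f ∈ ({η, u} : Set (ℝ → ℝ → ℝ)), ∀ i j : ℕ, i + j ≤ 3 →
      ∀ t ∈ Set.Icc (0 : ℝ) T,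
        Tendsto (fun x => pdxn i (pdtn j f) x t) (cocompact ℝ) (nhds 0))
    (hDecayProd₁ : ∀ t ∈ Set.Icc (0 : ℝ) T,
      Tendsto (fun x => η x t * u x t) (cocompact ℝ) (nhds 0))
    (hDecayProd₂ : ∀ t ∈ Set.Icc (0 : ℝ) T,
      Tendsto (fun x => pdx η x t * pdx u x t) (cocompact ℝ) (nhds 0)) :
    ∀ t₁ ∈ Set.Icc (0 : ℝ) T, ∀ t₂ ∈ Set.Icc (0 : ℝ) T,
      (∫ x : ℝ, (η x t₁ * u x t₁ + D ^ 2 / 6 * pdx η x t₁ * pdx u x t₁))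
        = ∫ x : ℝ, (η x t₂ * u x t₂ + D ^ 2 / 6 * pdx η x t₂ * pdx u x t₂) := by
  -- membership facts
  have hmemη : η ∈ ({η, u} : Set (ℝ → ℝ → ℝ)) := by simp
  have hmemu : u ∈ ({η, u} : Set (ℝ → ℝ → ℝ)) := by simp
  -- smoothness of derivatives
  have hη_x := BBMaux.contDiff_pdx hη
  have hu_x := BBMaux.contDiff_pdx hu
  have hη_t := BBMaux.contDiff_pdt hη
  have hu_t := BBMaux.contDiff_pdt hu
  have hη_xt := BBMaux.contDiff_pdx hη_t
  have hu_xt := BBMaux.contDiff_pdx hu_t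
  -- the integrand, its time derivative, and the flux
  set F : ℝ → ℝ → ℝ :=
    fun x t => η x t * u x t + D ^ 2 / 6 * pdx η x t * pdx u x t with hFdef
  set Ft : ℝ → ℝ → ℝ := fun x t =>
    pdt η x t * u x t + η x t * pdt u x t
      + D ^ 2 / 6 * (pdx (pdt η) x t * pdx u x t + pdx η x t * pdx (pdt u) x t) with hFtdef
  set G : ℝ → ℝ → ℝ := fun x t =>
    D ^ 2 / 6 * (u x t * pdx (pdt η) x t) + D ^ 2 / 6 * (η x t * pdx (pdt u) x t)
      - D * (u x t * u x t) / 2 - η x t * (u x t * u x t) - g * (η x t * η x t) / 2 with hGdef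
  -- continuity in x of slices
  have contx : ∀ (f : ℝ → ℝ → ℝ), ContDiff ℝ (⊤ : ℕ∞) (fun p : ℝ × ℝ => f p.1 p.2) →
      ∀ t, Continuous (fun x => f x t) := fun f hf t =>
    hf.continuous.comp (continuous_id.prodMk continuous_const)
  -- Clairaut identities
  have e1 : ∀ x t : ℝ, pdx (pdt η) x t = pdt (pdx η) x t := BBMaux.clairaut hη
  have e1u : ∀ x t : ℝ, pdx (pdt u) x t = pdt (pdx u) x t := BBMaux.clairaut hu
  have e2 : ∀ x t : ℝ, pdx (pdx (pdt η)) x t = pdt (pdx (pdx η)) x t := by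
    intro x t
    have : pdx (pdt η) = pdt (pdx η) := by funext a b; exact e1 a b
    rw [show pdx (pdx (pdt η)) x t = pdx (pdt (pdx η)) x t by rw [this]]
    exact BBMaux.clairaut hη_x x t
  have e2u : ∀ x t : ℝ, pdx (pdx (pdt u)) x t = pdt (pdx (pdx u)) x t := by
    intro x t
    have : pdx (pdt u) = pdt (pdx u) := by funext a b; exact e1u a b
    rw [show pdx (pdx (pdt u)) x t = pdx (pdt (pdx u)) x t by rw [this]]
    exact BBMaux.clairaut hu_x x t
  have hFcont : ∀ t, Continuous (fun x => F x t) := by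
    intro t
    simp only [hFdef]
    exact ((contx η hη t).mul (contx u hu t)).add
      ((continuous_const.mul (contx _ hη_x t)).mul (contx _ hu_x t))
  have hFtcont : ∀ t, Continuous (fun x => Ft x t) := by
    intro t
    simp only [hFtdef]
    exact (((contx _ hη_t t).mul (contx u hu t)).add
      ((contx η hη t).mul (contx _ hu_t t))).add
      (continuous_const.mul (((contx _ hη_xt t).mul (contx _ hu_x t)).add
        ((contx _ hη_x t).mul (contx _ hu_xt t))))
  -- key pointwise identity : Ft = ∂ₓ G on the strip
  have key : ∀ x : ℝ, ∀ t ∈ Set.Icc (0 : ℝ) T, pdx G x t = Ft x t := by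
    intro x t ht
    obtain ⟨eq1, eq2⟩ := hsol x t ht
    have hU := BBMaux.hasDerivAt_x hu x t
    have hE := BBMaux.hasDerivAt_x hη x t
    have hAxt := BBMaux.hasDerivAt_x hη_xt x t
    have hBxt := BBMaux.hasDerivAt_x hu_xt x t
    have hG : HasDerivAt (fun y => G y t)
        (D ^ 2 / 6 * (pdx u x t * pdx (pdt η) x t + u x t * pdx (pdx (pdt η)) x t)
          + D ^ 2 / 6 * (pdx η x t * pdx (pdt u) x t + η x t * pdx (pdx (pdt u)) x t)
          - D * (pdx u x t * u x t + u x t * pdx u x t) / 2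
          - (pdx η x t * (u x t * u x t) + η x t * (pdx u x t * u x t + u x t * pdx u x t))
          - g * (pdx η x t * η x t + η x t * pdx η x t) / 2) x :=
      (((((hU.mul hAxt).const_mul (D ^ 2 / 6)).add
          ((hE.mul hBxt).const_mul (D ^ 2 / 6))).sub
        (((hU.mul hU).const_mul D).div_const 2)).sub
          (hE.mul (hU.mul hU))).sub
        (((hE.mul hE).const_mul g).div_const 2)
    have hpdxG : pdx G x t = _ := hG.deriv
    have hprodD : HasDerivAt (fun y => (D + η y t) * u y t)
        ((0 + pdx η x t) * u x t + (D + η x t) * pdx u x t) x :=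
      ((hasDerivAt_const x D).add hE).mul hU
    have hprod : pdx (fun y s => (D + η y s) * u y s) x t
        = pdx η x t * u x t + (D + η x t) * pdx u x t := by
      have := hprodD.deriv
      simpa [pdx] using this
    have eq1' : pdt η x t = D ^ 2 / 6 * pdt (pdx (pdx η)) x t
        - (pdx η x t * u x t + (D + η x t) * pdx u x t) := by
      rw [← hprod]; linarith [eq1]
    have eq2' : pdt u x t = D ^ 2 / 6 * pdt (pdx (pdx u)) x t
        - g * pdx η x t - u x t * pdx u x t := by linarith [eq2]
    show pdx G x t = pdt η x t * u x t + η x t * pdt u x t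
      + D ^ 2 / 6 * (pdx (pdt η) x t * pdx u x t + pdx η x t * pdx (pdt u) x t)
    rw [hpdxG, eq1', eq2', e2 x t, e2u x t]
    ring
  -- time differentiability of the integrand
  have hFt_deriv : ∀ x t : ℝ, HasDerivAt (fun s => F x s) (Ft x t) t := by
    intro x t
    have h1 := (BBMaux.hasDerivAt_t hη x t).mul (BBMaux.hasDerivAt_t hu x t)
    have h2 := ((BBMaux.hasDerivAt_t hη_x x t).const_mul (D ^ 2 / 6)).mul
      (BBMaux.hasDerivAt_t hu_x x t)
    have h := h1.add h2
    refine h.congr_deriv (Eq.symm ?_)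
    show pdt η x t * u x t + η x t * pdt u x t
        + D ^ 2 / 6 * (pdx (pdt η) x t * pdx u x t + pdx η x t * pdx (pdt u) x t) = _
    rw [e1 x t, e1u x t]
    ring
  -- locally uniform sup bounds
  have supb : ∀ f ∈ ({η, u} : Set (ℝ → ℝ → ℝ)), ∀ i j : ℕ, i + j ≤ 2 →
      ∀ t₀ ∈ Set.Icc (0 : ℝ) T, ∃ ε > (0 : ℝ), ∃ C : ℝ,
        ∀ t ∈ Set.Icc (0 : ℝ) T, |t - t₀| < ε →
          ∀ x : ℝ, |pdxn i (pdtn j f) x t| ≤ C := by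
    intro f hf i j hij t₀ ht₀
    obtain ⟨ε, hε, φ, hφi, hφ⟩ := hDom f hf (i + 1) j (by omega) t₀ ht₀
    refine ⟨ε, hε, ∫ y, φ y, ?_⟩
    intro t ht hlt x
    have hfsm : ContDiff ℝ (⊤ : ℕ∞) (fun p : ℝ × ℝ => f p.1 p.2) := by
      rcases hf with rfl | rfl
      exacts [hη, hu]
    have hsm : ContDiff ℝ (⊤ : ℕ∞) (fun p : ℝ × ℝ => pdxn i (pdtn j f) p.1 p.2) :=
      BBMaux.contDiff_pdxn_pdtn hfsm i j
    have hatTop : (atTop : Filter ℝ) ≤ cocompact ℝ := by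
      rw [cocompact_eq_atBot_atTop]; exact le_sup_right
    exact BBMaux.abs_le_integral_of_deriv _ (fun y => pdxn (i + 1) (pdtn j f) y t) φ
      (fun y => BBMaux.hasDerivAt_x hsm y t)
      (hInt f hf (i + 1) j (by omega) t ht)
      ((hDecay f hf i j (by omega) t ht).mono_left hatTop)
      (hφ t ht hlt) hφi x
  -- integrability of Ft slices
  have getC : ∀ f ∈ ({η, u} : Set (ℝ → ℝ → ℝ)), ∀ i j : ℕ, i + j ≤ 2 →
      ∀ t ∈ Set.Icc (0 : ℝ) T, ∃ C : ℝ, ∀ x : ℝ, |pdxn i (pdtn j f) x t| ≤ C := by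
    intro f hf i j hij t ht
    obtain ⟨ε, hε, C, hC⟩ := supb f hf i j hij t ht
    exact ⟨C, hC t ht (by simpa using hε)⟩
  have hFt_int : ∀ t ∈ Set.Icc (0 : ℝ) T, Integrable (fun x => Ft x t) := by
    intro t ht
    obtain ⟨Cu, hCu⟩ := getC u hmemu 0 0 (by omega) t ht
    obtain ⟨Cη, hCη⟩ := getC η hmemη 0 0 (by omega) t ht
    obtain ⟨Cux, hCux⟩ := getC u hmemu 1 0 (by omega) t ht
    obtain ⟨Cηx, hCηx⟩ := getC η hmemη 1 0 (by omega) t ht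
    have i1 : Integrable (fun x => pdt η x t * u x t) :=
      BBMaux.integrable_mul_bdd (hInt η hmemη 0 1 (by omega) t ht) (contx u hu t) hCu
    have i2 : Integrable (fun x => η x t * pdt u x t) :=
      BBMaux.integrable_bdd_mul (hInt u hmemu 0 1 (by omega) t ht) (contx η hη t) hCη
    have i3 : Integrable (fun x => pdx (pdt η) x t * pdx u x t) :=
      BBMaux.integrable_mul_bdd (hInt η hmemη 1 1 (by omega) t ht)
        (contx _ hu_x t) hCux
    have i4 : Integrable (fun x => pdx η x t * pdx (pdt u) x t) :=
      BBMaux.integrable_bdd_mul (hInt u hmemu 1 1 (by omega) t ht)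
        (contx _ hη_x t) hCηx
    have := (i1.add i2).add ((i3.add i4).const_mul (D ^ 2 / 6))
    exact this.congr (ae_of_all _ fun x => by simp [hFtdef])
  -- integrability of F slices
  have hF_int : ∀ t ∈ Set.Icc (0 : ℝ) T, Integrable (fun x => F x t) := by
    intro t ht
    obtain ⟨Cu, hCu⟩ := getC u hmemu 0 0 (by omega) t ht
    obtain ⟨Cux, hCux⟩ := getC u hmemu 1 0 (by omega) t ht
    have i1 : Integrable (fun x => η x t * u x t) :=
      BBMaux.integrable_mul_bdd (hInt η hmemη 0 0 (by omega) t ht) (contx u hu t) hCu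
    have i2 : Integrable (fun x => pdx η x t * pdx u x t) :=
      BBMaux.integrable_mul_bdd (hInt η hmemη 1 0 (by omega) t ht) (contx _ hu_x t) hCux
    have := i1.add (i2.const_mul (D ^ 2 / 6))
    exact this.congr (ae_of_all _ fun x => by simp [hFdef, mul_assoc])
  -- vanishing of ∫ Ft
  have hGsm : ContDiff ℝ (⊤ : ℕ∞) (fun p : ℝ × ℝ => G p.1 p.2) := by
    simp only [hGdef]
    exact ((((contDiff_const.mul (hu.mul hη_xt)).add
      (contDiff_const.mul (hη.mul hu_xt))).sub
        ((contDiff_const.mul (hu.mul hu)).div_const 2)).sub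
          (hη.mul (hu.mul hu))).sub ((contDiff_const.mul (hη.mul hη)).div_const 2)
  have hFt0 : ∀ t ∈ Set.Icc (0 : ℝ) T, ∫ x, Ft x t = 0 := by
    intro t ht
    have hder : ∀ y : ℝ, HasDerivAt (fun y => G y t) (pdx G y t) y :=
      fun y => BBMaux.hasDerivAt_x hGsm y t
    have hi : Integrable (fun x => pdx G x t) :=
      (hFt_int t ht).congr (Eventually.of_forall fun x => (key x t ht).symm)
    have Tu : Tendsto (fun x => u x t) (cocompact ℝ) (nhds 0) :=
      hDecay u hmemu 0 0 (by omega) t ht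
    have Tη : Tendsto (fun x => η x t) (cocompact ℝ) (nhds 0) :=
      hDecay η hmemη 0 0 (by omega) t ht
    have Taxt : Tendsto (fun x => pdx (pdt η) x t) (cocompact ℝ) (nhds 0) :=
      hDecay η hmemη 1 1 (by omega) t ht
    have Tbxt : Tendsto (fun x => pdx (pdt u) x t) (cocompact ℝ) (nhds 0) :=
      hDecay u hmemu 1 1 (by omega) t ht
    have TG := (((((Tu.mul Taxt).const_mul (D ^ 2 / 6)).add
      ((Tη.mul Tbxt).const_mul (D ^ 2 / 6))).sub
        (((Tu.mul Tu).const_mul D).div_const 2)).sub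
          (Tη.mul (Tu.mul Tu))).sub (((Tη.mul Tη).const_mul g).div_const 2)
    have hT : Tendsto (fun x => G x t) (cocompact ℝ) (nhds 0) := by
      simpa [hGdef] using TG
    calc ∫ x, Ft x t = ∫ x, pdx G x t :=
          integral_congr_ae (Eventually.of_forall fun x => (key x t ht).symm)
      _ = 0 := BBMaux.integral_deriv_eq_zero _ _ hder hi hT
  -- derivative of H in the interior
  have hH' : ∀ t₀ ∈ Set.Ioo (0 : ℝ) T,
      HasDerivAt (fun t => ∫ x, F x t) (∫ x, Ft x t₀) t₀ := by
    intro t₀ ht₀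
    have ht₀' : t₀ ∈ Set.Icc (0 : ℝ) T := Set.Ioo_subset_Icc_self ht₀
    obtain ⟨ε₀, hε₀, hball⟩ := Metric.isOpen_iff.mp isOpen_Ioo t₀ ht₀
    obtain ⟨εa, hεa, Ca, hCa⟩ := supb u hmemu 0 0 (by omega) t₀ ht₀'
    obtain ⟨εb, hεb, Cb, hCb⟩ := supb η hmemη 0 0 (by omega) t₀ ht₀'
    obtain ⟨εc, hεc, Cc, hCc⟩ := supb u hmemu 1 0 (by omega) t₀ ht₀'
    obtain ⟨εd, hεd, Cd, hCd⟩ := supb η hmemη 1 0 (by omega) t₀ ht₀'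
    obtain ⟨ε1, hε1, φ1, hφ1i, hφ1⟩ := hDom η hmemη 0 1 (by omega) t₀ ht₀'
    obtain ⟨ε2, hε2, φ2, hφ2i, hφ2⟩ := hDom u hmemu 0 1 (by omega) t₀ ht₀'
    obtain ⟨ε3, hε3, φ3, hφ3i, hφ3⟩ := hDom η hmemη 1 1 (by omega) t₀ ht₀'
    obtain ⟨ε4, hε4, φ4, hφ4i, hφ4⟩ := hDom u hmemu 1 1 (by omega) t₀ ht₀'
    set ε : ℝ := min ε₀ (min εa (min εb (min εc (min εd (min ε1 (min ε2 (min ε3 ε4)))))))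
      with hεdef
    have hεpos : 0 < ε := by
      refine lt_min hε₀ (lt_min hεa (lt_min hεb (lt_min hεc
        (lt_min hεd (lt_min hε1 (lt_min hε2 (lt_min hε3 hε4)))))))
    have l0 : ε ≤ ε₀ := min_le_left _ _
    have r0 := min_le_right ε₀ (min εa (min εb (min εc (min εd (min ε1 (min ε2 (min ε3 ε4)))))))
    have la : ε ≤ εa := r0.trans (min_le_left _ _)
    have r1 := r0.trans (min_le_right εa _)
    have lb : ε ≤ εb := r1.trans (min_le_left _ _)
    have r2 := r1.trans (min_le_right εb _)
    have lc : ε ≤ εc := r2.trans (min_le_left _ _)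
    have r3 := r2.trans (min_le_right εc _)
    have ld : ε ≤ εd := r3.trans (min_le_left _ _)
    have r4 := r3.trans (min_le_right εd _)
    have l1 : ε ≤ ε1 := r4.trans (min_le_left _ _)
    have r5 := r4.trans (min_le_right ε1 _)
    have l2 : ε ≤ ε2 := r5.trans (min_le_left _ _)
    have r6 := r5.trans (min_le_right ε2 _)
    have l3 : ε ≤ ε3 := r6.trans (min_le_left _ _)
    have l4 : ε ≤ ε4 := r6.trans (min_le_right _ _)
    have hmem : ∀ t ∈ Metric.ball t₀ ε, t ∈ Set.Icc (0 : ℝ) T ∧ |t - t₀| < ε := by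
      intro t htb
      rw [Metric.mem_ball, Real.dist_eq] at htb
      refine ⟨Set.Ioo_subset_Icc_self (hball ?_), htb⟩
      rw [Metric.mem_ball, Real.dist_eq]
      exact lt_of_lt_of_le htb l0
    have hc6 : (0:ℝ) ≤ D ^ 2 / 6 := by positivity
    refine (hasDerivAt_integral_of_dominated_loc_of_deriv_le
      (F := fun t x => F x t) (F' := fun t x => Ft x t)
      (bound := fun x => φ1 x * Ca + Cb * φ2 x + D ^ 2 / 6 * (φ3 x * Cc + Cd * φ4 x))
      (μ := volume) (x₀ := t₀) (Metric.ball_mem_nhds t₀ hεpos)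
      (Eventually.of_forall fun t => (hFcont t).aestronglyMeasurable)
      (hF_int t₀ ht₀')
      ((hFtcont t₀).aestronglyMeasurable)
      ?_ ?_ ?_).2
    · refine ae_of_all _ fun x t htb => ?_
      obtain ⟨ht, hlt⟩ := hmem t htb
      have b1 : |pdt η x t| ≤ φ1 x := hφ1 t ht (lt_of_lt_of_le hlt l1) x
      have b2 : |pdt u x t| ≤ φ2 x := hφ2 t ht (lt_of_lt_of_le hlt l2) x
      have b3 : |pdx (pdt η) x t| ≤ φ3 x := hφ3 t ht (lt_of_lt_of_le hlt l3) x
      have b4 : |pdx (pdt u) x t| ≤ φ4 x := hφ4 t ht (lt_of_lt_of_le hlt l4) x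
      have ba : |u x t| ≤ Ca := hCa t ht (lt_of_lt_of_le hlt la) x
      have bb : |η x t| ≤ Cb := hCb t ht (lt_of_lt_of_le hlt lb) x
      have bc : |pdx u x t| ≤ Cc := hCc t ht (lt_of_lt_of_le hlt lc) x
      have bd : |pdx η x t| ≤ Cd := hCd t ht (lt_of_lt_of_le hlt ld) x
      have B1 : |pdt η x t * u x t| ≤ φ1 x * Ca := by
        rw [abs_mul]
        exact mul_le_mul b1 ba (abs_nonneg _) ((abs_nonneg _).trans b1)
      have B2 : |η x t * pdt u x t| ≤ Cb * φ2 x := by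
        rw [abs_mul]
        exact mul_le_mul bb b2 (abs_nonneg _) ((abs_nonneg _).trans bb)
      have B3 : |pdx (pdt η) x t * pdx u x t| ≤ φ3 x * Cc := by
        rw [abs_mul]
        exact mul_le_mul b3 bc (abs_nonneg _) ((abs_nonneg _).trans b3)
      have B4 : |pdx η x t * pdx (pdt u) x t| ≤ Cd * φ4 x := by
        rw [abs_mul]
        exact mul_le_mul bd b4 (abs_nonneg _) ((abs_nonneg _).trans bd)
      calc ‖Ft x t‖
          = |pdt η x t * u x t + η x t * pdt u x t
            + D ^ 2 / 6 * (pdx (pdt η) x t * pdx u x t + pdx η x t * pdx (pdt u) x t)| := by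
            rw [Real.norm_eq_abs]
        _ ≤ |pdt η x t * u x t| + |η x t * pdt u x t|
            + |D ^ 2 / 6 * (pdx (pdt η) x t * pdx u x t + pdx η x t * pdx (pdt u) x t)| :=
            abs_add_three _ _ _
        _ = |pdt η x t * u x t| + |η x t * pdt u x t|
            + D ^ 2 / 6 * |pdx (pdt η) x t * pdx u x t + pdx η x t * pdx (pdt u) x t| := by
            rw [show |D ^ 2 / 6 * (pdx (pdt η) x t * pdx u x t + pdx η x t * pdx (pdt u) x t)|
              = D ^ 2 / 6 * |pdx (pdt η) x t * pdx u x t + pdx η x t * pdx (pdt u) x t| from by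
                rw [abs_mul, abs_of_nonneg hc6]]
        _ ≤ |pdt η x t * u x t| + |η x t * pdt u x t|
            + D ^ 2 / 6 * (|pdx (pdt η) x t * pdx u x t| + |pdx η x t * pdx (pdt u) x t|) := by
            have := abs_add_le (pdx (pdt η) x t * pdx u x t) (pdx η x t * pdx (pdt u) x t)
            nlinarith [abs_nonneg (pdx (pdt η) x t * pdx u x t)]
        _ ≤ φ1 x * Ca + Cb * φ2 x + D ^ 2 / 6 * (φ3 x * Cc + Cd * φ4 x) := by
            have h34 := add_le_add B3 B4
            have := mul_le_mul_of_nonneg_left h34 hc6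
            linarith [add_le_add B1 B2]
    · exact ((hφ1i.mul_const Ca).add (hφ2i.const_mul Cb)).add
        (((hφ3i.mul_const Cc).add (hφ4i.const_mul Cd)).const_mul (D ^ 2 / 6))
    · exact ae_of_all _ fun x t _ => hFt_deriv x t
  -- continuity of H on the strip
  have hHcont : ContinuousOn (fun t => ∫ x, F x t) (Set.Icc (0 : ℝ) T) := by
    intro t₀ ht₀
    obtain ⟨εb, hεb, Cb, hCb⟩ := supb η hmemη 0 0 (by omega) t₀ ht₀
    obtain ⟨εd, hεd, Cd, hCd⟩ := supb η hmemη 1 0 (by omega) t₀ ht₀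
    obtain ⟨ε1, hε1, φu, hφui, hφu⟩ := hDom u hmemu 0 0 (by omega) t₀ ht₀
    obtain ⟨ε2, hε2, φux, hφuxi, hφux⟩ := hDom u hmemu 1 0 (by omega) t₀ ht₀
    set ε : ℝ := min εb (min εd (min ε1 ε2)) with hεdef
    have hεpos : 0 < ε := lt_min hεb (lt_min hεd (lt_min hε1 hε2))
    have lb : ε ≤ εb := min_le_left _ _
    have r0 := min_le_right εb (min εd (min ε1 ε2))
    have ld : ε ≤ εd := r0.trans (min_le_left _ _)
    have r1 := r0.trans (min_le_right εd _)
    have l1 : ε ≤ ε1 := r1.trans (min_le_left _ _)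
    have l2 : ε ≤ ε2 := r1.trans (min_le_right _ _)
    have hc6 : (0:ℝ) ≤ D ^ 2 / 6 := by positivity
    have hev : ∀ᶠ t in nhdsWithin t₀ (Set.Icc (0:ℝ) T), t ∈ Set.Icc (0:ℝ) T ∧ |t - t₀| < ε := by
      filter_upwards [self_mem_nhdsWithin,
        mem_nhdsWithin_of_mem_nhds (Metric.ball_mem_nhds t₀ hεpos)] with t h1 h2
      exact ⟨h1, by simpa [Real.dist_eq] using h2⟩
    apply MeasureTheory.continuousWithinAt_of_dominated
      (bound := fun x => Cb * φu x + D ^ 2 / 6 * (Cd * φux x))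
    · exact hev.mono fun t _ => (hFcont t).aestronglyMeasurable
    · refine hev.mono fun t ht => ae_of_all _ fun x => ?_
      have bb : |η x t| ≤ Cb := hCb t ht.1 (lt_of_lt_of_le ht.2 lb) x
      have bd : |pdx η x t| ≤ Cd := hCd t ht.1 (lt_of_lt_of_le ht.2 ld) x
      have bu : |u x t| ≤ φu x := hφu t ht.1 (lt_of_lt_of_le ht.2 l1) x
      have bux : |pdx u x t| ≤ φux x := hφux t ht.1 (lt_of_lt_of_le ht.2 l2) x
      have B1 : |η x t * u x t| ≤ Cb * φu x := by
        rw [abs_mul]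
        exact mul_le_mul bb bu (abs_nonneg _) ((abs_nonneg _).trans bb)
      have B2 : |pdx η x t * pdx u x t| ≤ Cd * φux x := by
        rw [abs_mul]
        exact mul_le_mul bd bux (abs_nonneg _) ((abs_nonneg _).trans bd)
      calc ‖F x t‖ = |η x t * u x t + D ^ 2 / 6 * (pdx η x t * pdx u x t)| := by
            rw [Real.norm_eq_abs]; simp only [hFdef]; ring_nf
        _ ≤ |η x t * u x t| + |D ^ 2 / 6 * (pdx η x t * pdx u x t)| := abs_add_le _ _
        _ = |η x t * u x t| + D ^ 2 / 6 * |pdx η x t * pdx u x t| := by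
            rw [show |D ^ 2 / 6 * (pdx η x t * pdx u x t)|
              = D ^ 2 / 6 * |pdx η x t * pdx u x t| from by rw [abs_mul, abs_of_nonneg hc6]]
        _ ≤ Cb * φu x + D ^ 2 / 6 * (Cd * φux x) := by
            have := mul_le_mul_of_nonneg_left B2 hc6
            linarith
    · exact (hφui.const_mul Cb).add ((hφuxi.const_mul Cd).const_mul (D ^ 2 / 6))
    · exact ae_of_all _ fun x => (hFt_deriv x t₀).continuousAt.continuousWithinAt
  -- conclusion
  have hzero : ∀ t ∈ Set.Ioo (0 : ℝ) T, HasDerivAt (fun t => ∫ x, F x t) 0 t := by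
    intro t ht
    have := hH' t ht
    rwa [hFt0 t (Set.Ioo_subset_Icc_self ht)] at this
  have hmono : MonotoneOn (fun t => ∫ x, F x t) (Set.Icc (0 : ℝ) T) := by
    apply monotoneOn_of_deriv_nonneg (convex_Icc 0 T) hHcont
    · intro t ht
      rw [interior_Icc] at ht
      exact (hzero t ht).differentiableAt.differentiableWithinAt
    · intro t ht
      rw [interior_Icc] at ht
      rw [(hzero t ht).deriv]
  have hanti : AntitoneOn (fun t => ∫ x, F x t) (Set.Icc (0 : ℝ) T) := by
    apply antitoneOn_of_deriv_nonpos (convex_Icc 0 T) hHcont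
    · intro t ht
      rw [interior_Icc] at ht
      exact (hzero t ht).differentiableAt.differentiableWithinAt
    · intro t ht
      rw [interior_Icc] at ht
      rw [(hzero t ht).deriv]
  intro t₁ ht₁ t₂ ht₂
  have : (∫ x, F x t₁) = ∫ x, F x t₂ := by
    rcases le_total t₁ t₂ with h | h
    · exact le_antisymm (hmono ht₁ ht₂ h) (hanti ht₁ ht₂ h)
    · exact le_antisymm (hanti ht₂ ht₁ h) (hmono ht₂ ht₁ h)
  simpa [hFdef] using this
end

section
/- Let a < b, let V be a finite-dimensional subspace of C¹([a,b];ℝ) containing the constant function 1, and let V₀ be a finite-dimensional subspace of C¹([a,b];ℝ) all of whose elements vanish at a and b. Denote by P and P₀ the L²(a,b)-orthogonal projections onto V and V₀ respectively. Let η̃ : [0,T] → V and ũ : [0,T] → V₀ be continuously differentiable curves satisfying, for every t ∈ [0,T]: (i) for all χ ∈ V, ∫_a^b η̃_t χ dx + (1/6) ∫_a^b (d/dt P₀[η̃_x]) χ' dx = ∫_a^b P₀[(1+η̃)ũ] χ' dx; and (ii) for all ψ ∈ V₀, ∫_a^b ũ_t ψ dx + (1/6) ∫_a^b (d/dt P[ũ_x])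 ψ' dx = (1/2) ∫_a^b P[ũ²] ψ' dx + ∫_a^b P[η̃] ψ' dx. Then the mass M(t) := ∫_a^b η̃(x,t) dx is constant on [0,T]. -/
/-!
Testing the first equation with `χ = 1`, which lies in `V`, kills both terms containing `χ'`,
so `∫ ∂ₜη̃ = 0`. The mass is the integral functional applied to `η̃(t) ∈ V`. On a
finite-dimensional space of functions every linear functional is a combination of point
evaluations, and finite-dimensional subspaces are closed under pointwise limits, so `∂ₜη̃(t) ∈ V`
and the mass is differentiable with derivative `∫ ∂ₜη̃(t) = 0`.
-/

open MeasureTheory Filter Set Topology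

namespace Submodule

variable {X 𝕜 : Type*} [Field 𝕜] {V : Submodule 𝕜 (X → 𝕜)}

theorem dual_mem_span_eval [FiniteDimensional 𝕜 V] (φ : Module.Dual 𝕜 V) :
    φ ∈ span 𝕜 (range fun x : X => (LinearMap.proj x).comp V.subtype) :=
  FiniteDimensional.mem_span_of_iInf_ker_le_ker fun v hv => by
    have hv0 : v = 0 := Subtype.ext <| funext fun x => by
      simpa using (mem_iInf _).1 hv x
    simp [hv0]

end Submodule

section Deriv

variable {X 𝕜 : Type*} [NontriviallyNormedField 𝕜] {V : Submodule 𝕜 (X → 𝕜)}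
  {γ : 𝕜 → X → 𝕜} {γ' : X → 𝕜} {t₀ : 𝕜}

theorem Submodule.mem_of_hasDerivAt_eval [CompleteSpace 𝕜] [FiniteDimensional 𝕜 V]
    (hγ : ∀ t, γ t ∈ V) (hγ' : ∀ x, HasDerivAt (fun t => γ t x) (γ' x) t₀) : γ' ∈ V := by
  have hslope : Tendsto (slope γ t₀) (𝓝[≠] t₀) (𝓝 γ') :=
    tendsto_pi_nhds.2 fun x => by
      convert (hγ' x).tendsto_slope using 1
      ext t
      simp [slope_def_module]
  exact V.closed_of_finiteDimensional.mem_of_tendsto hslope <| Eventually.of_forall fun t => by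
    rw [slope_def_module]
    exact V.smul_mem _ (V.sub_mem (hγ t) (hγ t₀))

theorem hasDerivAt_dual_apply_of_hasDerivAt_eval [FiniteDimensional 𝕜 V]
    (hγ : ∀ t, γ t ∈ V) (hγ'V : γ' ∈ V) (hγ' : ∀ x, HasDerivAt (fun t => γ t x) (γ' x) t₀)
    (φ : Module.Dual 𝕜 V) : HasDerivAt (fun t => φ ⟨γ t, hγ t⟩) (φ ⟨γ', hγ'V⟩) t₀ := by
  induction V.dual_mem_span_eval φ using Submodule.span_induction with
  | mem ψ hψ =>
    obtain ⟨x, rfl⟩ := hψ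
    exact hγ' x
  | zero => exact hasDerivAt_const t₀ 0
  | add ψ₁ ψ₂ _ _ h₁ h₂ => exact h₁.add h₂
  | smul c ψ _ h => exact h.const_mul c

end Deriv

noncomputable def Submodule.intervalIntegralDual (V : Submodule ℝ (ℝ → ℝ)) (a b : ℝ)
    (hV : ∀ f ∈ V, IntervalIntegrable f volume a b) : Module.Dual ℝ V where
  toFun f := ∫ x in a..b, (f : ℝ → ℝ) x
  map_add' f g := intervalIntegral.integral_add (hV f f.2) (hV g g.2)
  map_smul' c f := intervalIntegral.integral_smul c (f : ℝ → ℝ)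

theorem mass_conservation_conservative_galerkin_reflective_general
    (a b T : ℝ)
    (V : Submodule ℝ (ℝ → ℝ))
    (hVfin : FiniteDimensional ℝ V)
    (hVC1 : ∀ f ∈ V, ContDiff ℝ 1 f)
    (hVone : (fun _ : ℝ => (1 : ℝ)) ∈ V)
    (P₀ : (ℝ → ℝ) → (ℝ → ℝ))
    (ηh uh : ℝ → ℝ → ℝ)
    (hηmem : ∀ t : ℝ, ηh t ∈ V)
    (hηC1 : ∀ x : ℝ, ContDiff ℝ 1 (fun t => ηh t x))
    (heq1 : ∀ t ∈ Set.Icc (0 : ℝ) T, ∀ χ ∈ V,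
      (∫ x in a..b, deriv (fun s => ηh s x) t * χ x)
          + 1 / 6 * ∫ x in a..b,
              deriv (fun s => P₀ (fun y => deriv (ηh s) y) x) t * deriv χ x
        = ∫ x in a..b, P₀ (fun y => (1 + ηh t y) * uh t y) x * deriv χ x) :
    ∀ t₁ ∈ Set.Icc (0 : ℝ) T, ∀ t₂ ∈ Set.Icc (0 : ℝ) T,
      (∫ x in a..b, ηh t₁ x) = ∫ x in a..b, ηh t₂ x := by
  have hηt (t x : ℝ) : HasDerivAt (fun s => ηh s x) (deriv (fun s => ηh s x) t) t :=
    ((hηC1 x).differentiable one_ne_zero t).hasDerivAt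
  have hηtV (t : ℝ) : (fun x => deriv (fun s => ηh s x) t) ∈ V :=
    V.mem_of_hasDerivAt_eval hηmem (hηt t)
  let mass := V.intervalIntegralDual a b fun f hf => (hVC1 f hf).continuous.intervalIntegrable a b
  have hmass (t : ℝ) : HasDerivAt (fun s => ∫ x in a..b, ηh s x)
      (∫ x in a..b, deriv (fun s => ηh s x) t) t :=
    hasDerivAt_dual_apply_of_hasDerivAt_eval hηmem (hηtV t) (hηt t) mass
  have hmass_deriv (t : ℝ) (ht : t ∈ Icc 0 T) : ∫ x in a..b, deriv (fun s => ηh s x) t = 0 := by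
    simpa using heq1 t ht _ hVone
  intro t₁ ht₁ t₂ ht₂
  have hdist := (convex_Icc 0 T).norm_image_sub_le_of_norm_hasDerivWithin_le
    (fun t _ => (hmass t).hasDerivWithinAt) (C := 0)
    (fun t ht => by rw [hmass_deriv t ht, norm_zero]) ht₂ ht₁
  simpa [sub_eq_zero] using hdist

/-- Conservation of mass for the modified (conservative) Galerkin semidiscretisation of
the nondimensional BBM-BBM system with reflective boundary conditions: if `ηh : [0,T] → V`
and `uh : [0,T] → V₀` are continuously differentiable curves satisfying the projected weak
formulation, then `M(t) = ∫_a^b ηh dx` is constant. Here `P`, `P₀` are the `L²(a,b)`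
orthogonal projections onto the finite-dimensional subspaces `V ⊆ C¹` (containing the
constants) and `V₀ ⊆ C¹` (whose elements vanish at the endpoints), characterised by
membership together with the orthogonality relations. -/
theorem mass_conservation_conservative_galerkin_reflective
    (a b T : ℝ) (hab : a < b)
    (V V₀ : Submodule ℝ (ℝ → ℝ))
    (hVfin : FiniteDimensional ℝ V) (hV₀fin : FiniteDimensional ℝ V₀)
    (hVC1 : ∀ f ∈ V, ContDiff ℝ 1 f)
    (hV₀C1 : ∀ f ∈ V₀, ContDiff ℝ 1 f)
    (hVone : (fun _ : ℝ => (1 : ℝ)) ∈ V)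
    (hV₀bc : ∀ f ∈ V₀, f a = 0 ∧ f b = 0)
    (P P₀ : (ℝ → ℝ) → (ℝ → ℝ))
    (hPmem : ∀ f : ℝ → ℝ, P f ∈ V) (hP₀mem : ∀ f : ℝ → ℝ, P₀ f ∈ V₀)
    (hPproj : ∀ f : ℝ → ℝ, ∀ χ ∈ V,
      (∫ x in a..b, P f x * χ x) = ∫ x in a..b, f x * χ x)
    (hP₀proj : ∀ f : ℝ → ℝ, ∀ ψ ∈ V₀,
      (∫ x in a..b, P₀ f x * ψ x) = ∫ x in a..b, f x * ψ x)
    (ηh uh : ℝ → ℝ → ℝ)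
    (hηmem : ∀ t : ℝ, ηh t ∈ V) (humem : ∀ t : ℝ, uh t ∈ V₀)
    (hηC1 : ∀ x : ℝ, ContDiff ℝ 1 (fun t => ηh t x))
    (huC1 : ∀ x : ℝ, ContDiff ℝ 1 (fun t => uh t x))
    (hηxC1 : ∀ x : ℝ, ContDiff ℝ 1 (fun t => P₀ (fun y => deriv (ηh t) y) x))
    (huxC1 : ∀ x : ℝ, ContDiff ℝ 1 (fun t => P (fun y => deriv (uh t) y) x))
    (heq1 : ∀ t ∈ Set.Icc (0 : ℝ) T, ∀ χ ∈ V,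
      (∫ x in a..b, deriv (fun s => ηh s x) t * χ x)
          + 1 / 6 * ∫ x in a..b,
              deriv (fun s => P₀ (fun y => deriv (ηh s) y) x) t * deriv χ x
        = ∫ x in a..b, P₀ (fun y => (1 + ηh t y) * uh t y) x * deriv χ x)
    (heq2 : ∀ t ∈ Set.Icc (0 : ℝ) T, ∀ ψ ∈ V₀,
      (∫ x in a..b, deriv (fun s => uh s x) t * ψ x)
          + 1 / 6 * ∫ x in a..b,
              deriv (fun s => P (fun y => deriv (uh s) y) x) t * deriv ψ x
        = 1 / 2 * (∫ x in a..b, P (fun y => uh t y ^ 2) x * deriv ψ x)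
            + ∫ x in a..b, P (ηh t) x * deriv ψ x) :
    ∀ t₁ ∈ Set.Icc (0 : ℝ) T, ∀ t₂ ∈ Set.Icc (0 : ℝ) T,
      (∫ x in a..b, ηh t₁ x) = ∫ x in a..b, ηh t₂ x :=
  mass_conservation_conservative_galerkin_reflective_general a b T V hVfin hVC1 hVone P₀ ηh uh hηmem
    hηC1 heq1
end

section
/- Let a < b, let V be a finite-dimensional subspace of C¹([a,b];ℝ), and let V₀ be a finite-dimensional subspace of C¹([a,b];ℝ) all of whose elements vanish at a and b. Denote by P and P₀ the L²(a,b)-orthogonal projections onto V and V₀ respectively. Let η̃ : [0,T] → V and ũ : [0,T] → V₀ be continuously differentiable curves satisfying, for every t ∈ [0,T]: (i) for all χ ∈ V, ∫_a^b η̃_t χ dx + (1/6) ∫_a^b (d/dt P₀[η̃_x]) χ' dx = ∫_a^b P₀[(1+η̃)ũ] χ' dx; and (ii) for all ψ ∈ V₀, ∫_a^b ũ_t ψ dx + (1/6) ∫_a^b (d/dt P[ũ_x]) ψ' dx = (1/2) ∫_a^b P[ũ²] ψ' dx + ∫_a^b P[η̃] ψ' dx. Then the semidiscrete energy E(t) :=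 (1/2) ∫_a^b ( η̃² + (1+η̃) ũ² ) dx is constant on [0,T]. -/
/-!
Test the first equation with `Q = (1/6) ∂ₜP[uₓ] - (P[u²]/2 + P[η]) ∈ V` and the second with
`R = (1/6) ∂ₜP₀[ηₓ] - P₀[(1+η)u] ∈ V₀`. Their right-hand sides become `-∫ R Q'` and `-∫ Q R'`,
which add up to the boundary term `-[QR]ₐᵇ = 0`, so `∫ ηₜ Q + ∫ uₜ R = 0`. As `ηₜ ∈ V` and
`uₜ ∈ V₀`, the projections drop out of this sum, which leaves `-dE/dt` plus the dispersive cross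
terms `(1/6) (∫ ∂ₜP[uₓ] ηₜ + ∫ ∂ₜP₀[ηₓ] uₜ) = (1/6) ∫ (uₜₓ ηₜ + ηₜₓ uₜ) = (1/6) [ηₜ uₜ]ₐᵇ = 0`.

Differentiating under the integral sign and exchanging `∂ₜ` with `∂ₓ` is legitimate because a
finite-dimensional space of functions has a Lagrange basis `wᵢ` at finitely many nodes `xᵢ`: a
curve in it that is C¹ at every point is `∑ᵢ γ(t, xᵢ) wᵢ(x)`, a finite sum of C¹ coefficients times
fixed profiles.
-/

open MeasureTheory Set

theorem Submodule.exists_unisolvent_finset {X 𝕜 : Type*} [Field 𝕜] (W : Submodule 𝕜 (X → 𝕜))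
    [FiniteDimensional 𝕜 W] : ∃ s : Finset X, ∀ v ∈ W, (∀ x ∈ s, v x = 0) → v = 0 := by
  classical
  let K : Finset X → Submodule 𝕜 W := fun s =>
    ⨅ x ∈ s, LinearMap.ker ((LinearMap.proj x).comp W.subtype)
  have hK : ∀ s (v : W), v ∈ K s ↔ ∀ x ∈ s, (v : X → 𝕜) x = 0 := by simp [K]
  obtain ⟨_, ⟨s, rfl⟩, hmin⟩ := wellFounded_lt.has_min (range K) ⟨K ∅, ∅, rfl⟩
  refine ⟨s, fun v hv hvs => funext fun x => ?_⟩
  have hle : K (insert x s) ≤ K s := fun w hw =>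
    (hK _ w).2 fun y hy => (hK _ w).1 hw y (Finset.mem_insert_of_mem hy)
  have heq : K (insert x s) = K s := hle.eq_of_not_lt (hmin _ ⟨_, rfl⟩)
  have hvK : (⟨v, hv⟩ : W) ∈ K (insert x s) := heq ▸ (hK s _).2 hvs
  exact (hK _ _).1 hvK x (Finset.mem_insert_self x s)

theorem Submodule.exists_lagrange_basis {X 𝕜 : Type*} [Field 𝕜] (W : Submodule 𝕜 (X → 𝕜))
    [FiniteDimensional 𝕜 W] :
    ∃ (s : Finset X) (w : s → X → 𝕜), (∀ i, w i ∈ W) ∧ ∀ v ∈ W, v = ∑ i : s, v i • w i := by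
  classical
  obtain ⟨s, hs⟩ := W.exists_unisolvent_finset
  let ev : W →ₗ[𝕜] s → 𝕜 := LinearMap.pi fun i => (LinearMap.proj (i : X)).comp W.subtype
  have hev : LinearMap.ker ev = ⊥ := by
    refine (Submodule.eq_bot_iff _).2 fun v hv => Subtype.ext (hs v v.2 fun x hx => ?_)
    simpa [ev] using congrFun (LinearMap.mem_ker.1 hv) ⟨x, hx⟩
  obtain ⟨g, hg⟩ := LinearMap.exists_leftInverse_of_injective ev hev
  refine ⟨s, fun i => g fun j => if i = j then 1 else 0, fun i => (g _).2, fun v hv => ?_⟩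
  have hv' : (⟨v, hv⟩ : W) = g (ev ⟨v, hv⟩) := (LinearMap.congr_fun hg _).symm
  calc v = (g (ev ⟨v, hv⟩) : X → 𝕜) := congrArg Subtype.val hv'
    _ = _ := by
      rw [pi_eq_sum_univ (ev ⟨v, hv⟩), map_sum]
      simp [ev]

theorem hasDerivAt_sum_mul_const {ι : Type*} [Fintype ι] {c : ι → ℝ → ℝ}
    (hc : ∀ i, ContDiff ℝ 1 (c i)) (d : ι → ℝ) (t : ℝ) :
    HasDerivAt (fun s => ∑ i, c i s * d i) (∑ i, deriv (c i) t * d i) t :=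
  HasDerivAt.fun_sum fun i _ => (((hc i).differentiable one_ne_zero t).hasDerivAt).mul_const (d i)

theorem hasDerivAt_sum_const_mul {ι : Type*} [Fintype ι] {c : ι → ℝ → ℝ}
    (hc : ∀ i, ContDiff ℝ 1 (c i)) (d : ι → ℝ) (t : ℝ) :
    HasDerivAt (fun s => ∑ i, d i * c i s) (∑ i, d i * deriv (c i) t) t :=
  HasDerivAt.fun_sum fun i _ => (((hc i).differentiable one_ne_zero t).hasDerivAt).const_mul (d i)

def SeparatedC1 (S : Set (ℝ → ℝ)) (γ : ℝ → ℝ → ℝ) : Prop :=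
  ∃ (ι : Type) (_ : Fintype ι) (c h : ι → ℝ → ℝ),
    (∀ i, ContDiff ℝ 1 (c i)) ∧ (∀ i, h i ∈ S) ∧ γ = fun t x => ∑ i, c i t * h i x

namespace SeparatedC1

variable {S : Set (ℝ → ℝ)} {γ γ₁ γ₂ : ℝ → ℝ → ℝ}

theorem mono {T : Set (ℝ → ℝ)} (hγ : SeparatedC1 S γ) (hST : S ⊆ T) : SeparatedC1 T γ := by
  obtain ⟨ι, _, c, h, hc, hh, rfl⟩ := hγ
  exact ⟨ι, _, c, h, hc, fun i => hST (hh i), rfl⟩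

theorem of_continuous {χ : ℝ → ℝ} (hχ : Continuous χ) :
    SeparatedC1 {f | Continuous f} fun _ x => χ x :=
  ⟨Unit, inferInstance, fun _ _ => 1, fun _ => χ, fun _ => contDiff_const, fun _ => hχ,
    by simp⟩

theorem add (h₁ : SeparatedC1 S γ₁) (h₂ : SeparatedC1 S γ₂) :
    SeparatedC1 S fun t x => γ₁ t x + γ₂ t x := by
  obtain ⟨ι₁, _, c₁, h₁, hc₁, hh₁, rfl⟩ := h₁
  obtain ⟨ι₂, _, c₂, h₂, hc₂, hh₂, rfl⟩ := h₂
  refine ⟨ι₁ ⊕ ι₂, inferInstance, Sum.elim c₁ c₂, Sum.elim h₁ h₂,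
    fun i => ?_, fun i => ?_, by simp [Fintype.sum_sum_type]⟩ <;> cases i <;> simp [*]

theorem mul (h₁ : SeparatedC1 {f | Continuous f} γ₁) (h₂ : SeparatedC1 {f | Continuous f} γ₂) :
    SeparatedC1 {f | Continuous f} fun t x => γ₁ t x * γ₂ t x := by
  obtain ⟨ι₁, _, c₁, h₁, hc₁, hh₁, rfl⟩ := h₁
  obtain ⟨ι₂, _, c₂, h₂, hc₂, hh₂, rfl⟩ := h₂
  refine ⟨ι₁ × ι₂, inferInstance, fun p t => c₁ p.1 t * c₂ p.2 t, fun p x => h₁ p.1 x * h₂ p.2 x,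
    fun p => (hc₁ p.1).mul (hc₂ p.2), fun p => (hh₁ p.1).mul (hh₂ p.2), ?_⟩
  ext t x
  simp only [Finset.sum_mul_sum, Fintype.sum_prod_type]
  exact Finset.sum_congr rfl fun i _ => Finset.sum_congr rfl fun j _ => by ring

theorem hasDerivAt_apply (hγ : SeparatedC1 S γ) (t x : ℝ) :
    HasDerivAt (fun s => γ s x) (deriv (fun s => γ s x) t) t := by
  obtain ⟨ι, _, c, h, hc, -, rfl⟩ := hγ
  exact (hasDerivAt_sum_mul_const hc _ t).differentiableAt.hasDerivAt

theorem hasDerivAt_integral (hγ : SeparatedC1 {f | Continuous f} γ) (a b t : ℝ) :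
    HasDerivAt (fun τ => ∫ x in a..b, γ τ x) (∫ x in a..b, deriv (fun s => γ s x) t) t := by
  obtain ⟨ι, _, c, h, hc, hh, rfl⟩ := hγ
  have hint : ∀ (d : ι → ℝ), ∫ x in a..b, ∑ i, d i * h i x = ∑ i, d i * ∫ x in a..b, h i x :=
    fun d => by
      rw [intervalIntegral.integral_finsetSum (f := fun i x => d i * h i x) fun i _ =>
        ((continuous_const.mul (hh i)).intervalIntegrable a b)]
      simp only [intervalIntegral.integral_const_mul]
  simp only [hint, (hasDerivAt_sum_mul_const hc _ t).deriv]
  exact hasDerivAt_sum_mul_const hc _ t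

theorem deriv_x (hS : ∀ f ∈ S, ContDiff ℝ 1 f) (hγ : SeparatedC1 S γ) :
    SeparatedC1 {f | Continuous f} fun t x => deriv (γ t) x := by
  obtain ⟨ι, _, c, h, hc, hh, rfl⟩ := hγ
  refine ⟨ι, inferInstance, c, fun i => deriv (h i), hc,
    fun i => (hS _ (hh i)).continuous_deriv le_rfl, ?_⟩
  ext t x
  exact (hasDerivAt_sum_const_mul (fun i => hS _ (hh i)) _ x).deriv

theorem deriv_apply_mem {W : Submodule ℝ (ℝ → ℝ)} (hγ : SeparatedC1 W γ) (t : ℝ) :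
    (fun x => deriv (fun s => γ s x) t) ∈ W := by
  obtain ⟨ι, _, c, h, hc, hh, rfl⟩ := hγ
  have : (fun x => deriv (fun s => ∑ i, c i s * h i x) t) = ∑ i, deriv (c i) t • h i := by
    ext x
    simp [(hasDerivAt_sum_mul_const hc (fun i => h i x) t).deriv, Finset.sum_apply]
  rw [this]
  exact W.sum_mem fun i _ => W.smul_mem _ (hh i)

theorem deriv_deriv_comm (hS : ∀ f ∈ S, ContDiff ℝ 1 f) (hγ : SeparatedC1 S γ) (t x : ℝ) :
    deriv (fun y => deriv (fun s => γ s y) t) x = deriv (fun s => deriv (γ s) x) t := by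
  obtain ⟨ι, _, c, h, hc, hh, rfl⟩ := hγ
  have hh' : ∀ i, ContDiff ℝ 1 (h i) := fun i => hS _ (hh i)
  have hx : (fun y => deriv (fun s => ∑ i, c i s * h i y) t)
      = fun y => ∑ i, deriv (c i) t * h i y :=
    funext fun y => (hasDerivAt_sum_mul_const hc _ t).deriv
  have ht : (fun s => deriv (fun y => ∑ i, c i s * h i y) x)
      = fun s => ∑ i, c i s * deriv (h i) x :=
    funext fun s => (hasDerivAt_sum_const_mul hh' _ x).deriv
  rw [hx, ht, (hasDerivAt_sum_const_mul hh' _ x).deriv, (hasDerivAt_sum_mul_const hc _ t).deriv]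

theorem of_forall_mem {W : Submodule ℝ (ℝ → ℝ)} [FiniteDimensional ℝ W] (hmem : ∀ t, γ t ∈ W)
    (hC1 : ∀ x, ContDiff ℝ 1 fun t => γ t x) : SeparatedC1 W γ := by
  obtain ⟨s, w, hw, hrep⟩ := W.exists_lagrange_basis
  refine ⟨s, inferInstance, fun i t => γ t i, w, fun i => hC1 i, hw, ?_⟩
  ext t x
  simpa using congrFun (hrep (γ t) (hmem t)) x

end SeparatedC1

theorem integral_deriv_mul_eq_of_forall_integral_mul_eq {p q : ℝ → ℝ → ℝ}
    (hp : SeparatedC1 {f | Continuous f} p) (hq : SeparatedC1 {f | Continuous f} q)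
    {χ : ℝ → ℝ} (hχ : Continuous χ) {a b : ℝ}
    (hpq : ∀ τ, ∫ x in a..b, p τ x * χ x = ∫ x in a..b, q τ x * χ x) (t : ℝ) :
    ∫ x in a..b, deriv (fun s => p s x) t * χ x = ∫ x in a..b, deriv (fun s => q s x) t * χ x := by
  have hderiv : ∀ {r}, SeparatedC1 {f | Continuous f} r → HasDerivAt
      (fun τ => ∫ x in a..b, r τ x * χ x) (∫ x in a..b, deriv (fun s => r s x) t * χ x) t :=
    fun hr => ((hr.mul (.of_continuous hχ)).hasDerivAt_integral a b t).congr_deriv <|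
      intervalIntegral.integral_congr fun x _ => ((hr.hasDerivAt_apply t x).mul_const _).deriv
  exact (hderiv hp).unique (funext hpq ▸ hderiv hq)

theorem hasDerivAt_integral_energy {η u : ℝ → ℝ → ℝ} (hη : SeparatedC1 {f | Continuous f} η)
    (hu : SeparatedC1 {f | Continuous f} u) (a b t : ℝ) :
    HasDerivAt (fun τ => ∫ x in a..b, (η τ x ^ 2 + (1 + η τ x) * u τ x ^ 2))
      (2 * ∫ x in a..b, (η t x * deriv (fun s => η s x) t
        + 1 / 2 * (u t x ^ 2 * deriv (fun s => η s x) t)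
        + (1 + η t x) * u t x * deriv (fun s => u s x) t)) t := by
  have hγ : SeparatedC1 {f | Continuous f} fun τ x => η τ x ^ 2 + (1 + η τ x) * u τ x ^ 2 := by
    simpa only [sq] using (hη.mul hη).add
      (((SeparatedC1.of_continuous continuous_const).add hη).mul (hu.mul hu))
  refine (hγ.hasDerivAt_integral a b t).congr_deriv ?_
  rw [← intervalIntegral.integral_const_mul]
  refine intervalIntegral.integral_congr fun x _ => ?_
  have hη' := hη.hasDerivAt_apply t x
  have hu' := hu.hasDerivAt_apply t x
  refine ((hη'.pow 2).add ((hη'.const_add 1).mul (hu'.pow 2))).deriv.trans ?_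
  simp only [Pi.pow_apply]
  ring

theorem integral_mul_deriv_add_integral_mul_deriv_eq_zero {f g : ℝ → ℝ} {a b : ℝ}
    (hf : ContDiff ℝ 1 f) (hg : ContDiff ℝ 1 g) (ha : g a = 0) (hb : g b = 0) :
    (∫ x in a..b, g x * deriv f x) + ∫ x in a..b, f x * deriv g x = 0 := by
  have hf' := hf.continuous_deriv le_rfl
  have hg' := hg.continuous_deriv le_rfl
  have h := intervalIntegral.integral_deriv_mul_eq_sub
    (fun x _ => (hf.differentiable one_ne_zero x).hasDerivAt)
    (fun x _ => (hg.differentiable one_ne_zero x).hasDerivAt)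
    (hf'.intervalIntegrable a b) (hg'.intervalIntegrable a b)
  rw [ha, hb, mul_zero, mul_zero, sub_zero] at h
  have := hf.continuous
  have := hg.continuous
  rw [← intervalIntegral.integral_add ((by fun_prop : Continuous _).intervalIntegrable _ _)
    ((by fun_prop : Continuous _).intervalIntegrable _ _), ← h]
  exact intervalIntegral.integral_congr fun x _ => by ring

section Galerkin

variable {a b : ℝ} {V V₀ : Submodule ℝ (ℝ → ℝ)} {P P₀ : (ℝ → ℝ) → (ℝ → ℝ)}

theorem galerkin_cross_terms_eq_zero (hVC1 : ∀ f ∈ V, ContDiff ℝ 1 f)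
    (hV₀C1 : ∀ f ∈ V₀, ContDiff ℝ 1 f) (hV₀bc : ∀ f ∈ V₀, f a = 0 ∧ f b = 0)
    (hPproj : ∀ f : ℝ → ℝ, ∀ χ ∈ V, ∫ x in a..b, P f x * χ x = ∫ x in a..b, f x * χ x)
    (hP₀proj : ∀ f : ℝ → ℝ, ∀ ψ ∈ V₀, ∫ x in a..b, P₀ f x * ψ x = ∫ x in a..b, f x * ψ x)
    {η u : ℝ → ℝ → ℝ} (hη : SeparatedC1 V η) (hu : SeparatedC1 V₀ u)
    (hσ : SeparatedC1 V fun τ x => P (fun y => deriv (u τ) y) x)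
    (hθ : SeparatedC1 V₀ fun τ x => P₀ (fun y => deriv (η τ) y) x) (t : ℝ) :
    (∫ x in a..b, deriv (fun s => P (fun y => deriv (u s) y) x) t * deriv (fun s => η s x) t)
      + ∫ x in a..b, deriv (fun s => P₀ (fun y => deriv (η s) y) x) t * deriv (fun s => u s x) t
      = 0 := by
  have hVc : ∀ f ∈ (V : Set (ℝ → ℝ)), Continuous f := fun f hf => (hVC1 f hf).continuous
  have hV₀c : ∀ f ∈ (V₀ : Set (ℝ → ℝ)), Continuous f := fun f hf => (hV₀C1 f hf).continuous
  have hη' := hη.deriv_apply_mem t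
  have hu' := hu.deriv_apply_mem t
  rw [integral_deriv_mul_eq_of_forall_integral_mul_eq (hσ.mono hVc) (hu.deriv_x hV₀C1)
      (hVc _ hη') (fun τ => hPproj _ _ hη') t,
    integral_deriv_mul_eq_of_forall_integral_mul_eq (hθ.mono hV₀c) (hη.deriv_x hVC1)
      (hV₀c _ hu') (fun τ => hP₀proj _ _ hu') t]
  simp only [← hη.deriv_deriv_comm hVC1, ← hu.deriv_deriv_comm hV₀C1]
  rw [add_comm]
  simpa only [mul_comm] using integral_mul_deriv_add_integral_mul_deriv_eq_zero (hVC1 _ hη')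
    (hV₀C1 _ hu') (hV₀bc _ hu').1 (hV₀bc _ hu').2

theorem galerkin_energy_rate_eq_zero (hVC1 : ∀ f ∈ V, ContDiff ℝ 1 f)
    (hV₀C1 : ∀ f ∈ V₀, ContDiff ℝ 1 f) (hV₀bc : ∀ f ∈ V₀, f a = 0 ∧ f b = 0)
    (hPmem : ∀ f : ℝ → ℝ, P f ∈ V) (hP₀mem : ∀ f : ℝ → ℝ, P₀ f ∈ V₀)
    (hPproj : ∀ f : ℝ → ℝ, ∀ χ ∈ V, ∫ x in a..b, P f x * χ x = ∫ x in a..b, f x * χ x)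
    (hP₀proj : ∀ f : ℝ → ℝ, ∀ ψ ∈ V₀, ∫ x in a..b, P₀ f x * ψ x = ∫ x in a..b, f x * ψ x)
    {η u η' u' θ' σ' : ℝ → ℝ} (hη : η ∈ V) (hu : u ∈ V₀) (hη' : η' ∈ V) (hu' : u' ∈ V₀)
    (hθ' : θ' ∈ V₀) (hσ' : σ' ∈ V)
    (h₁ : ∀ χ ∈ V, (∫ x in a..b, η' x * χ x) + 1 / 6 * ∫ x in a..b, θ' x * deriv χ x
      = ∫ x in a..b, P₀ (fun y => (1 + η y) * u y) x * deriv χ x)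
    (h₂ : ∀ ψ ∈ V₀, (∫ x in a..b, u' x * ψ x) + 1 / 6 * ∫ x in a..b, σ' x * deriv ψ x
      = 1 / 2 * (∫ x in a..b, P (fun y => u y ^ 2) x * deriv ψ x)
        + ∫ x in a..b, P η x * deriv ψ x)
    (hcross : (∫ x in a..b, σ' x * η' x) + ∫ x in a..b, θ' x * u' x = 0) :
    ∫ x in a..b, (η x * η' x + 1 / 2 * (u x ^ 2 * η' x) + (1 + η x) * u x * u' x) = 0 := by
  obtain ⟨Q, hQ⟩ : ∃ Q, Q = (1 / 6 : ℝ) • σ' - ((1 / 2 : ℝ) • P (fun y => u y ^ 2) + P η) :=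
    ⟨_, rfl⟩
  obtain ⟨R, hR⟩ : ∃ R, R = (1 / 6 : ℝ) • θ' - P₀ (fun y => (1 + η y) * u y) := ⟨_, rfl⟩
  have hQV : Q ∈ V :=
    hQ ▸ V.sub_mem (V.smul_mem _ hσ') (V.add_mem (V.smul_mem _ (hPmem _)) (hPmem _))
  have hRV₀ : R ∈ V₀ := hR ▸ V₀.sub_mem (V₀.smul_mem _ hθ') (hP₀mem _)
  have hQx : ∀ x, Q x = 1 / 6 * σ' x - (1 / 2 * P (fun y => u y ^ 2) x + P η x) := by
    simp [hQ]
  have hRx : ∀ x, R x = 1 / 6 * θ' x - P₀ (fun y => (1 + η y) * u y) x := by simp [hR]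
  -- continuity facts for the `fun_prop` discharger of the integrability side goals
  have c₁ := (hVC1 _ hη).continuous
  have c₂ := (hV₀C1 _ hu).continuous
  have c₃ := (hVC1 _ hη').continuous
  have c₄ := (hV₀C1 _ hu').continuous
  have c₅ := (hV₀C1 _ hθ').continuous
  have c₆ := (hVC1 _ hσ').continuous
  have c₇ := (hVC1 _ (hPmem fun y => u y ^ 2)).continuous
  have c₈ := (hVC1 _ (hPmem η)).continuous
  have c₉ := (hV₀C1 _ (hP₀mem fun y => (1 + η y) * u y)).continuous
  have c₁₀ := (hVC1 _ hQV).continuous_deriv le_rfl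
  have c₁₁ := (hV₀C1 _ hRV₀).continuous_deriv le_rfl
  have E₁ : (∫ x in a..b, η' x * Q x) + ∫ x in a..b, R x * deriv Q x = 0 := by
    have := h₁ Q hQV
    simp (disch := exact (by fun_prop : Continuous _).intervalIntegrable _ _) only [hRx, sub_mul,
      mul_assoc, intervalIntegral.integral_sub, intervalIntegral.integral_const_mul]
    linarith
  have E₂ : (∫ x in a..b, u' x * R x) + ∫ x in a..b, Q x * deriv R x = 0 := by
    have := h₂ R hRV₀
    simp (disch := exact (by fun_prop : Continuous _).intervalIntegrable _ _) only [hQx, sub_mul,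
      add_mul, mul_assoc, intervalIntegral.integral_sub, intervalIntegral.integral_add,
      intervalIntegral.integral_const_mul]
    linarith
  have hibp := integral_mul_deriv_add_integral_mul_deriv_eq_zero (hVC1 _ hQV) (hV₀C1 _ hRV₀)
    (hV₀bc _ hRV₀).1 (hV₀bc _ hRV₀).2
  have hPu := hPproj (fun y => u y ^ 2) η' hη'
  have hPη := hPproj η η' hη'
  have hP₀m := hP₀proj (fun y => (1 + η y) * u y) u' hu'
  have key : (∫ x in a..b, η' x * Q x) + ∫ x in a..b, u' x * R x = 0 := by linarith
  -- keeps `add_mul` from rewriting inside the argument of `P₀`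
  set Pm := P₀ fun y => (1 + η y) * u y
  simp (disch := exact (by fun_prop : Continuous _).intervalIntegrable _ _) only [hQx, hRx,
    mul_comm (η' _), mul_comm (u' _), sub_mul, add_mul, mul_assoc, intervalIntegral.integral_sub,
    intervalIntegral.integral_add, intervalIntegral.integral_const_mul] at key
  simp (disch := exact (by fun_prop : Continuous _).intervalIntegrable _ _) only [
    intervalIntegral.integral_add, intervalIntegral.integral_const_mul]
  linarith

end Galerkin

theorem energy_conservation_conservative_galerkin_reflective_general
    (a b T : ℝ)
    (V V₀ : Submodule ℝ (ℝ → ℝ))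
    (hVfin : FiniteDimensional ℝ V) (hV₀fin : FiniteDimensional ℝ V₀)
    (hVC1 : ∀ f ∈ V, ContDiff ℝ 1 f)
    (hV₀C1 : ∀ f ∈ V₀, ContDiff ℝ 1 f)
    (hV₀bc : ∀ f ∈ V₀, f a = 0 ∧ f b = 0)
    (P P₀ : (ℝ → ℝ) → (ℝ → ℝ))
    (hPmem : ∀ f : ℝ → ℝ, P f ∈ V) (hP₀mem : ∀ f : ℝ → ℝ, P₀ f ∈ V₀)
    (hPproj : ∀ f : ℝ → ℝ, ∀ χ ∈ V,
      (∫ x in a..b, P f x * χ x) = ∫ x in a..b, f x * χ x)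
    (hP₀proj : ∀ f : ℝ → ℝ, ∀ ψ ∈ V₀,
      (∫ x in a..b, P₀ f x * ψ x) = ∫ x in a..b, f x * ψ x)
    (ηh uh : ℝ → ℝ → ℝ)
    (hηmem : ∀ t : ℝ, ηh t ∈ V) (humem : ∀ t : ℝ, uh t ∈ V₀)
    (hηC1 : ∀ x : ℝ, ContDiff ℝ 1 (fun t => ηh t x))
    (huC1 : ∀ x : ℝ, ContDiff ℝ 1 (fun t => uh t x))
    (hηxC1 : ∀ x : ℝ, ContDiff ℝ 1 (fun t => P₀ (fun y => deriv (ηh t) y) x))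
    (huxC1 : ∀ x : ℝ, ContDiff ℝ 1 (fun t => P (fun y => deriv (uh t) y) x))
    (heq1 : ∀ t ∈ Set.Icc (0 : ℝ) T, ∀ χ ∈ V,
      (∫ x in a..b, deriv (fun s => ηh s x) t * χ x)
          + 1 / 6 * ∫ x in a..b,
              deriv (fun s => P₀ (fun y => deriv (ηh s) y) x) t * deriv χ x
        = ∫ x in a..b, P₀ (fun y => (1 + ηh t y) * uh t y) x * deriv χ x)
    (heq2 : ∀ t ∈ Set.Icc (0 : ℝ) T, ∀ ψ ∈ V₀,
      (∫ x in a..b, deriv (fun s => uh s x) t * ψ x)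
          + 1 / 6 * ∫ x in a..b,
              deriv (fun s => P (fun y => deriv (uh s) y) x) t * deriv ψ x
        = 1 / 2 * (∫ x in a..b, P (fun y => uh t y ^ 2) x * deriv ψ x)
            + ∫ x in a..b, P (ηh t) x * deriv ψ x) :
    ∀ t₁ ∈ Set.Icc (0 : ℝ) T, ∀ t₂ ∈ Set.Icc (0 : ℝ) T,
      (1 / 2) * (∫ x in a..b, (ηh t₁ x ^ 2 + (1 + ηh t₁ x) * uh t₁ x ^ 2))
        = (1 / 2) * ∫ x in a..b, (ηh t₂ x ^ 2 + (1 + ηh t₂ x) * uh t₂ x ^ 2) := by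
  have hη : SeparatedC1 V ηh := .of_forall_mem hηmem hηC1
  have hu : SeparatedC1 V₀ uh := .of_forall_mem humem huC1
  have hθ : SeparatedC1 V₀ fun τ x => P₀ (fun y => deriv (ηh τ) y) x :=
    .of_forall_mem (fun _ => hP₀mem _) hηxC1
  have hσ : SeparatedC1 V fun τ x => P (fun y => deriv (uh τ) y) x :=
    .of_forall_mem (fun _ => hPmem _) huxC1
  have hE : ∀ t ∈ Icc 0 T, HasDerivAt
      (fun τ => ∫ x in a..b, (ηh τ x ^ 2 + (1 + ηh τ x) * uh τ x ^ 2)) 0 t := fun t ht => by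
    have h := hasDerivAt_integral_energy (hη.mono fun f hf => (hVC1 f hf).continuous)
      (hu.mono fun f hf => (hV₀C1 f hf).continuous) a b t
    rwa [galerkin_energy_rate_eq_zero hVC1 hV₀C1 hV₀bc hPmem hP₀mem hPproj hP₀proj (hηmem t)
      (humem t) (hη.deriv_apply_mem t) (hu.deriv_apply_mem t) (hθ.deriv_apply_mem t)
      (hσ.deriv_apply_mem t) (heq1 t ht) (heq2 t ht)
      (galerkin_cross_terms_eq_zero hVC1 hV₀C1 hV₀bc hPproj hP₀proj hη hu hσ hθ t),
      mul_zero] at h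
  have hconst := constant_of_has_deriv_right_zero
    (fun t ht => (hE t ht).continuousAt.continuousWithinAt)
    (fun t ht => (hE t (Ico_subset_Icc_self ht)).hasDerivWithinAt)
  intro t₁ ht₁ t₂ ht₂
  exact congrArg _ ((hconst t₁ ht₁).trans (hconst t₂ ht₂).symm)

/-- Conservation of the semidiscrete energy `E(t) = (1/2) ∫_a^b ( ηh² + (1+ηh) uh² ) dx`
for the modified (conservative) Galerkin semidiscretisation of the nondimensional
BBM-BBM system with reflective boundary conditions. Here `P`, `P₀` are the `L²(a,b)`
orthogonal projections onto the finite-dimensional subspaces `V ⊆ C¹` and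
`V₀ ⊆ C¹` (whose elements vanish at the endpoints), characterised by membership
together with the orthogonality relations. -/
theorem energy_conservation_conservative_galerkin_reflective
    (a b T : ℝ) (hab : a < b)
    (V V₀ : Submodule ℝ (ℝ → ℝ))
    (hVfin : FiniteDimensional ℝ V) (hV₀fin : FiniteDimensional ℝ V₀)
    (hVC1 : ∀ f ∈ V, ContDiff ℝ 1 f)
    (hV₀C1 : ∀ f ∈ V₀, ContDiff ℝ 1 f)
    (hV₀bc : ∀ f ∈ V₀, f a = 0 ∧ f b = 0)
    (P P₀ : (ℝ → ℝ) → (ℝ → ℝ))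
    (hPmem : ∀ f : ℝ → ℝ, P f ∈ V) (hP₀mem : ∀ f : ℝ → ℝ, P₀ f ∈ V₀)
    (hPproj : ∀ f : ℝ → ℝ, ∀ χ ∈ V,
      (∫ x in a..b, P f x * χ x) = ∫ x in a..b, f x * χ x)
    (hP₀proj : ∀ f : ℝ → ℝ, ∀ ψ ∈ V₀,
      (∫ x in a..b, P₀ f x * ψ x) = ∫ x in a..b, f x * ψ x)
    (ηh uh : ℝ → ℝ → ℝ)
    (hηmem : ∀ t : ℝ, ηh t ∈ V) (humem : ∀ t : ℝ, uh t ∈ V₀)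
    (hηC1 : ∀ x : ℝ, ContDiff ℝ 1 (fun t => ηh t x))
    (huC1 : ∀ x : ℝ, ContDiff ℝ 1 (fun t => uh t x))
    (hηxC1 : ∀ x : ℝ, ContDiff ℝ 1 (fun t => P₀ (fun y => deriv (ηh t) y) x))
    (huxC1 : ∀ x : ℝ, ContDiff ℝ 1 (fun t => P (fun y => deriv (uh t) y) x))
    (heq1 : ∀ t ∈ Set.Icc (0 : ℝ) T, ∀ χ ∈ V,
      (∫ x in a..b, deriv (fun s => ηh s x) t * χ x)
          + 1 / 6 * ∫ x in a..b,
              deriv (fun s => P₀ (fun y => deriv (ηh s) y) x) t * deriv χ x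
        = ∫ x in a..b, P₀ (fun y => (1 + ηh t y) * uh t y) x * deriv χ x)
    (heq2 : ∀ t ∈ Set.Icc (0 : ℝ) T, ∀ ψ ∈ V₀,
      (∫ x in a..b, deriv (fun s => uh s x) t * ψ x)
          + 1 / 6 * ∫ x in a..b,
              deriv (fun s => P (fun y => deriv (uh s) y) x) t * deriv ψ x
        = 1 / 2 * (∫ x in a..b, P (fun y => uh t y ^ 2) x * deriv ψ x)
            + ∫ x in a..b, P (ηh t) x * deriv ψ x) :
    ∀ t₁ ∈ Set.Icc (0 : ℝ) T, ∀ t₂ ∈ Set.Icc (0 : ℝ) T,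
      (1 / 2) * (∫ x in a..b, (ηh t₁ x ^ 2 + (1 + ηh t₁ x) * uh t₁ x ^ 2))
        = (1 / 2) * ∫ x in a..b, (ηh t₂ x ^ 2 + (1 + ηh t₂ x) * uh t₂ x ^ 2) :=
  energy_conservation_conservative_galerkin_reflective_general a b T V V₀ hVfin hV₀fin hVC1 hV₀C1
    hV₀bc P P₀ hPmem hP₀mem hPproj hP₀proj ηh uh hηmem humem hηC1 huC1 hηxC1 huxC1 heq1 heq2
end

section
/- Let a < b, and let V_p be a finite-dimensional subspace of C¹([a,b];ℝ) such that every φ ∈ V_p satisfies φ(a) = φ(b). Denote by P_p the L²(a,b)-orthogonal projection onto V_p. Let η̃, ũ : [0,T] → V_p be continuously differentiable curves satisfying, for every t ∈ [0,T]: (i) for all χ ∈ V_p, ∫_a^b η̃_t χ dx + (1/6) ∫_a^b (d/dt P_p[η̃_x]) χ' dx = ∫_a^b P_p[(1+η̃)ũ] χ' dx; and (ii) for all ψ ∈ V_p, ∫_a^b ũ_t ψ dx + (1/6) ∫_a^b (d/dt P_p[ũ_x]) ψ' dx = (1/2) ∫_a^b P_p[ũ²] ψ' dx + ∫_a^b P_p[η̃]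 ψ' dx. Then the semidiscrete energy E(t) := (1/2) ∫_a^b ( η̃² + (1+η̃) ũ² ) dx is constant on [0,T]. -/
open MeasureTheory Filter Set Topology

/-!
Test the first equation with `P η + P (u²) / 2 - ∂ₜP(uₓ) / 6` and the second with
`P ((1 + η) u) - ∂ₜP(ηₓ) / 6`, and add. By the projection property the terms in `∂ₜη`, `∂ₜu`
sum to `E' - (∫ ∂ₜP(uₓ) ∂ₜη + ∫ ∂ₜP(ηₓ) ∂ₜu) / 6`; every other term is a pairing `∫ f g'` of two
elements of `V` and cancels against `∫ g f'` by periodic integration by parts. The leftover equals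
`∫ (∂ₜu)ₓ ∂ₜη + ∫ (∂ₜη)ₓ ∂ₜu`, which vanishes for the same reason.

Only pointwise differentiability in time is assumed. It suffices because every linear functional
on a finite-dimensional space of functions is a finite combination of point evaluations, so
integrals of curves in such a space can be differentiated under the integral sign.
-/

/-- The point evaluations have zero common kernel, so they span the dual. -/
theorem Submodule.exists_finsupp_dual_apply_eq_sum_eval {𝕜 X : Type*} [Field 𝕜]
    (W : Submodule 𝕜 (X → 𝕜)) [FiniteDimensional 𝕜 W] (L : Module.Dual 𝕜 W) :
    ∃ c : X →₀ 𝕜, ∀ v : W, L v = c.sum fun x r => r * (v : X → 𝕜) x := by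
  let ev : X → Module.Dual 𝕜 W := fun x => (LinearMap.proj x).comp W.subtype
  have hsep : ⨅ x, LinearMap.ker (ev x) ≤ LinearMap.ker L := by
    intro v hv
    have hv0 : v = 0 := Subtype.ext <| funext fun x => (Submodule.mem_iInf _).1 hv x
    simp [hv0]
  obtain ⟨c, hc⟩ := Finsupp.mem_span_range_iff_exists_finsupp.1
    (FiniteDimensional.mem_span_of_iInf_ker_le_ker hsep)
  refine ⟨c, fun v => ?_⟩
  rw [← hc]
  simp [Finsupp.sum, ev]

section CurveInFiniteDimensional

variable {𝕜 X : Type*} [NontriviallyNormedField 𝕜] [CompleteSpace 𝕜]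
  {W : Submodule 𝕜 (X → 𝕜)} [FiniteDimensional 𝕜 W] {γ : 𝕜 → X → 𝕜} {d : X → 𝕜} {t : 𝕜}

/-- The difference quotients of `γ` lie in `W`, which is closed for the topology of pointwise
convergence. -/
theorem Submodule.mem_of_hasDerivAt_apply (hγ : ∀ s, γ s ∈ W)
    (hd : ∀ x, HasDerivAt (fun s => γ s x) (d x) t) : d ∈ W := by
  have hslope : Tendsto (slope γ t) (𝓝[≠] t) (𝓝 d) :=
    tendsto_pi_nhds.2 fun x => hasDerivAt_iff_tendsto_slope.1 (hd x)
  exact W.closed_of_finiteDimensional.mem_of_tendsto hslope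
    (Eventually.of_forall fun s => W.smul_mem _ (W.sub_mem (hγ s) (hγ t)))

theorem Submodule.hasDerivAt_dual_apply (hγ : ∀ s, γ s ∈ W)
    (hd : ∀ x, HasDerivAt (fun s => γ s x) (d x) t) (L : Module.Dual 𝕜 W) :
    HasDerivAt (fun s => L ⟨γ s, hγ s⟩) (L ⟨d, W.mem_of_hasDerivAt_apply hγ hd⟩) t := by
  obtain ⟨c, hc⟩ := W.exists_finsupp_dual_apply_eq_sum_eval L
  simp only [hc, Finsupp.sum]
  exact HasDerivAt.fun_sum fun x _ => (hd x).const_mul (c x)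

end CurveInFiniteDimensional

theorem Submodule.hasDerivAt_intervalIntegral_linearMap {X : Type*} {W : Submodule ℝ (X → ℝ)}
    [FiniteDimensional ℝ W] {γ : ℝ → X → ℝ} {d : X → ℝ} {t a b : ℝ}
    (T : W →ₗ[ℝ] ℝ → ℝ) (hT : ∀ v, IntervalIntegrable (T v) volume a b)
    (hγ : ∀ s, γ s ∈ W) (hd : ∀ x, HasDerivAt (fun s => γ s x) (d x) t) :
    HasDerivAt (fun s => ∫ x in a..b, T ⟨γ s, hγ s⟩ x)
      (∫ x in a..b, T ⟨d, W.mem_of_hasDerivAt_apply hγ hd⟩ x) t :=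
  W.hasDerivAt_dual_apply hγ hd
    { toFun := fun v => ∫ x in a..b, T v x
      map_add' := fun v w => by
        simp only [map_add, Pi.add_apply]
        exact intervalIntegral.integral_add (hT v) (hT w)
      map_smul' := fun r v => by
        simp only [map_smul, Pi.smul_apply, smul_eq_mul, intervalIntegral.integral_const_mul,
          RingHom.id_apply] }

noncomputable def Submodule.derivLinearMap {𝕜 : Type*} [NontriviallyNormedField 𝕜]
    (W : Submodule 𝕜 (𝕜 → 𝕜)) (hW : ∀ f ∈ W, Differentiable 𝕜 f) : W →ₗ[𝕜] 𝕜 → 𝕜 where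
  toFun f := deriv f
  map_add' f g := funext fun x => deriv_add (hW f f.2 x) (hW g g.2 x)
  map_smul' c f := funext fun x => deriv_const_smul c (hW f f.2 x)

noncomputable def intervalIntegralMulForm (a b : ℝ) {V : Submodule ℝ (ℝ → ℝ)}
    (hV : ∀ f ∈ V, Continuous f) (D : V →ₗ[ℝ] ℝ → ℝ) (hD : ∀ g, Continuous (D g)) :
    LinearMap.BilinForm ℝ V :=
  LinearMap.mk₂ ℝ (fun f g => ∫ x in a..b, (f : ℝ → ℝ) x * D g x)
    (fun f₁ f₂ g => by
      simp only [Submodule.coe_add, Pi.add_apply, add_mul]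
      exact intervalIntegral.integral_add (((hV _ f₁.2).mul (hD g)).intervalIntegrable a b)
        (((hV _ f₂.2).mul (hD g)).intervalIntegrable a b))
    (fun c f g => by
      simp only [Submodule.coe_smul, Pi.smul_apply, smul_eq_mul, mul_assoc,
        intervalIntegral.integral_const_mul])
    (fun f g₁ g₂ => by
      simp only [map_add, Pi.add_apply, mul_add]
      exact intervalIntegral.integral_add (((hV _ f.2).mul (hD g₁)).intervalIntegrable a b)
        (((hV _ f.2).mul (hD g₂)).intervalIntegrable a b))
    (fun c f g => by
      simp only [map_smul, Pi.smul_apply, smul_eq_mul, mul_left_comm _ c,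
        intervalIntegral.integral_const_mul])

theorem Submodule.continuous_of_mem_mul {X R : Type*} [TopologicalSpace X] [CommSemiring R]
    [TopologicalSpace R] [IsTopologicalSemiring R] {M N : Submodule R (X → R)}
    (hM : ∀ f ∈ M, Continuous f) (hN : ∀ g ∈ N, Continuous g) {h : X → R} (hh : h ∈ M * N) :
    Continuous h :=
  Submodule.mul_induction_on hh (fun f hf g hg => (hM f hf).mul (hN g hg))
    fun _ _ => Continuous.add

theorem Submodule.continuous_of_mem_sup {X R : Type*} [TopologicalSpace X] [Semiring R]
    [TopologicalSpace R] [ContinuousAdd R] {M N : Submodule R (X → R)}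
    (hM : ∀ f ∈ M, Continuous f) (hN : ∀ g ∈ N, Continuous g) {h : X → R} (hh : h ∈ M ⊔ N) :
    Continuous h := by
  obtain ⟨f, hf, g, hg, rfl⟩ := Submodule.mem_sup.1 hh
  exact (hM f hf).add (hN g hg)

theorem integral_mul_deriv_eq_neg_integral_mul_deriv_of_eq {a b : ℝ} {f g : ℝ → ℝ}
    (hf : ContDiff ℝ 1 f) (hg : ContDiff ℝ 1 g) (hfab : f a = f b) (hgab : g a = g b) :
    ∫ x in a..b, f x * deriv g x = -∫ x in a..b, g x * deriv f x := by
  have hdf : ∀ x, HasDerivAt f (deriv f x) x :=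
    fun x => (hf.differentiable one_ne_zero x).hasDerivAt
  have hdg : ∀ x, HasDerivAt g (deriv g x) x :=
    fun x => (hg.differentiable one_ne_zero x).hasDerivAt
  rw [intervalIntegral.integral_mul_deriv_eq_deriv_mul (fun x _ => hdf x) (fun x _ => hdg x)
    ((hf.continuous_deriv le_rfl).intervalIntegrable a b)
    ((hg.continuous_deriv le_rfl).intervalIntegrable a b), hfab, hgab,
    intervalIntegral.integral_congr fun x _ => mul_comm (deriv f x) (g x)]
  ring

noncomputable def l2Form (a b : ℝ) {V : Submodule ℝ (ℝ → ℝ)} (hV : ∀ f ∈ V, Continuous f) :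
    LinearMap.BilinForm ℝ V :=
  intervalIntegralMulForm a b hV V.subtype fun v => hV v v.2

noncomputable def derivForm (a b : ℝ) {V : Submodule ℝ (ℝ → ℝ)} (hV : ∀ f ∈ V, ContDiff ℝ 1 f) :
    LinearMap.BilinForm ℝ V :=
  intervalIntegralMulForm a b (fun f hf => (hV f hf).continuous)
    (V.derivLinearMap fun f hf => (hV f hf).differentiable one_ne_zero)
    fun v => (hV v v.2).continuous_deriv le_rfl

theorem l2Form_comm {a b : ℝ} {V : Submodule ℝ (ℝ → ℝ)} (hV : ∀ f ∈ V, Continuous f) (f h : V) :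
    l2Form a b hV f h = l2Form a b hV h f :=
  intervalIntegral.integral_congr fun _ _ => mul_comm _ _

theorem derivForm_antisymm {a b : ℝ} {V : Submodule ℝ (ℝ → ℝ)} (hV : ∀ f ∈ V, ContDiff ℝ 1 f)
    (hVab : ∀ f ∈ V, f a = f b) (f h : V) : derivForm a b hV f h = -derivForm a b hV h f :=
  integral_mul_deriv_eq_neg_integral_mul_deriv_of_eq (hV _ f.2) (hV _ h.2) (hVab _ f.2)
    (hVab _ h.2)

/-- `g` stands for the `L²` pairing and `ω` for `(f, h) ↦ ∫ f h'`. -/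
theorem bilinForm_energy_rate_eq_zero {V : Type*} [AddCommGroup V] [Module ℝ V]
    (g ω : LinearMap.BilinForm ℝ V) (hg : ∀ f h, g f h = g h f) (hω : ∀ f h, ω f h = -ω h f)
    {ηt ut A B S Dη Du : V}
    (h₁ : ∀ χ, g ηt χ + 1 / 6 * ω Dη χ = ω S χ)
    (h₂ : ∀ ψ, g ut ψ + 1 / 6 * ω Du ψ = 1 / 2 * ω B ψ + ω A ψ)
    (hD : g Du ηt + g Dη ut = 0) :
    g A ηt + 1 / 2 * g B ηt + g S ut = 0 := by
  have e₁ := h₁ (A + (1 / 2 : ℝ) • B - (1 / 6 : ℝ) • Du)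
  have e₂ := h₂ (S - (1 / 6 : ℝ) • Dη)
  simp only [map_add, map_sub, map_smul, smul_eq_mul] at e₁ e₂
  linarith [hg ηt A, hg ηt B, hg ut S, hg ηt Du, hg ut Dη, hω S A, hω B S, hω Du S, hω Dη A,
    hω Dη B, hω Dη Du]

section GalerkinCurves

variable {a b t : ℝ} {V : Submodule ℝ (ℝ → ℝ)} [FiniteDimensional ℝ V] {P : (ℝ → ℝ) → ℝ → ℝ}

/-- The integrand lies in the finite-dimensional space `V * V ⊔ V * V * V`, so the integral may
be differentiated under the integral sign. -/
theorem hasDerivAt_intervalIntegral_energy (hV : ∀ f ∈ V, Continuous f) {η u : ℝ → ℝ → ℝ}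
    {ηt ut : ℝ → ℝ} (hη : ∀ s, η s ∈ V) (hu : ∀ s, u s ∈ V)
    (hηt : ∀ x, HasDerivAt (fun s => η s x) (ηt x) t)
    (hut : ∀ x, HasDerivAt (fun s => u s x) (ut x) t) :
    HasDerivAt (fun s => ∫ x in a..b, (η s x ^ 2 + (1 + η s x) * u s x ^ 2))
      (2 * (∫ x in a..b, η t x * ηt x) + (∫ x in a..b, u t x ^ 2 * ηt x)
        + 2 * ∫ x in a..b, (1 + η t x) * u t x * ut x) t := by
  let W := V * V ⊔ V * V * V
  have : FiniteDimensional ℝ W := by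
    have hV : V.FG := (Submodule.fg_iff_finiteDimensional V).2 inferInstance
    exact (Submodule.fg_iff_finiteDimensional W).1 ((hV.mul hV).sup ((hV.mul hV).mul hV))
  have hVV : ∀ f ∈ V * V, Continuous f := fun f => Submodule.continuous_of_mem_mul hV hV
  have hW : ∀ f ∈ W, Continuous f := fun f => Submodule.continuous_of_mem_sup hVV
    fun g => Submodule.continuous_of_mem_mul hVV hV
  have hmem : ∀ s, (fun x => η s x ^ 2 + (1 + η s x) * u s x ^ 2) ∈ W := by
    intro s
    have hsplit : (fun x => η s x ^ 2 + (1 + η s x) * u s x ^ 2)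
        = (η s * η s + u s * u s) + η s * u s * u s := by
      funext x
      simp only [Pi.add_apply, Pi.mul_apply]
      ring
    rw [hsplit]
    refine W.add_mem (Submodule.mem_sup_left (add_mem ?_ ?_)) (Submodule.mem_sup_right ?_)
    all_goals repeat apply Submodule.mul_mem_mul
    all_goals first | exact hη s | exact hu s
  have hderiv : ∀ x, HasDerivAt (fun s => η s x ^ 2 + (1 + η s x) * u s x ^ 2)
      (2 * (η t x * ηt x) + u t x ^ 2 * ηt x + 2 * ((1 + η t x) * u t x * ut x)) t := by
    intro x
    refine (((hηt x).fun_pow 2).fun_add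
      (((hηt x).const_add 1).fun_mul ((hut x).fun_pow 2))).congr_deriv ?_
    norm_num
    ring
  have hηt_cont := hV _ (V.mem_of_hasDerivAt_apply hη hηt)
  have hut_cont := hV _ (V.mem_of_hasDerivAt_apply hu hut)
  have hη_cont := hV _ (hη t)
  have hu_cont := hV _ (hu t)
  refine (W.hasDerivAt_intervalIntegral_linearMap W.subtype
    (fun v => (hW v v.2).intervalIntegrable a b) hmem hderiv).congr_deriv ?_
  change ∫ x in a..b,
    (2 * (η t x * ηt x) + u t x ^ 2 * ηt x + 2 * ((1 + η t x) * u t x * ut x)) = _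
  rw [intervalIntegral.integral_add, intervalIntegral.integral_add,
    intervalIntegral.integral_const_mul, intervalIntegral.integral_const_mul]
  all_goals
    apply Continuous.intervalIntegrable
    fun_prop

/-- Both sides are the derivative at `t` of `s ↦ ∫ P (∂ₓ η s) f = ∫ ∂ₓ η s · f`. -/
theorem integral_timeDeriv_proj_deriv_mul_eq (hV : ∀ f ∈ V, ContDiff ℝ 1 f) (hPmem : ∀ f, P f ∈ V)
    (hPproj : ∀ f, ∀ χ ∈ V, ∫ x in a..b, P f x * χ x = ∫ x in a..b, f x * χ x)
    {η : ℝ → ℝ → ℝ} {ηt Dη f : ℝ → ℝ} (hη : ∀ s, η s ∈ V)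
    (hηt : ∀ x, HasDerivAt (fun s => η s x) (ηt x) t)
    (hDη : ∀ x, HasDerivAt (fun s => P (deriv (η s)) x) (Dη x) t) (hf : f ∈ V) :
    ∫ x in a..b, Dη x * f x = ∫ x in a..b, deriv ηt x * f x := by
  have hcont : ∀ g ∈ V, Continuous g := fun g hg => (hV g hg).continuous
  have hproj : HasDerivAt (fun s => ∫ x in a..b, P (deriv (η s)) x * f x)
      (∫ x in a..b, Dη x * f x) t :=
    V.hasDerivAt_intervalIntegral_linearMap ((LinearMap.mulRight ℝ f).comp V.subtype)
      (fun v => ((hcont v v.2).mul (hcont f hf)).intervalIntegrable a b) (fun s => hPmem _) hDη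
  have hderiv : HasDerivAt (fun s => ∫ x in a..b, deriv (η s) x * f x)
      (∫ x in a..b, deriv ηt x * f x) t :=
    V.hasDerivAt_intervalIntegral_linearMap ((LinearMap.mulRight ℝ f).comp
        (V.derivLinearMap fun g hg => (hV g hg).differentiable one_ne_zero))
      (fun v => (((hV v v.2).continuous_deriv le_rfl).mul (hcont f hf)).intervalIntegrable a b)
      hη hηt
  simp only [hPproj _ f hf] at hproj
  exact hproj.unique hderiv

theorem integral_timeDeriv_proj_deriv_mul_add_eq_zero (hV : ∀ f ∈ V, ContDiff ℝ 1 f)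
    (hVab : ∀ f ∈ V, f a = f b) (hPmem : ∀ f, P f ∈ V)
    (hPproj : ∀ f, ∀ χ ∈ V, ∫ x in a..b, P f x * χ x = ∫ x in a..b, f x * χ x)
    {η u : ℝ → ℝ → ℝ} {ηt ut Dη Du : ℝ → ℝ} (hη : ∀ s, η s ∈ V) (hu : ∀ s, u s ∈ V)
    (hηt : ∀ x, HasDerivAt (fun s => η s x) (ηt x) t)
    (hut : ∀ x, HasDerivAt (fun s => u s x) (ut x) t)
    (hDη : ∀ x, HasDerivAt (fun s => P (deriv (η s)) x) (Dη x) t)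
    (hDu : ∀ x, HasDerivAt (fun s => P (deriv (u s)) x) (Du x) t) :
    (∫ x in a..b, Du x * ηt x) + ∫ x in a..b, Dη x * ut x = 0 := by
  have hηtV := V.mem_of_hasDerivAt_apply hη hηt
  have hutV := V.mem_of_hasDerivAt_apply hu hut
  rw [integral_timeDeriv_proj_deriv_mul_eq hV hPmem hPproj hu hut hDu hηtV,
    integral_timeDeriv_proj_deriv_mul_eq hV hPmem hPproj hη hηt hDη hutV]
  simp only [mul_comm (deriv _ _)]
  rw [integral_mul_deriv_eq_neg_integral_mul_deriv_of_eq (hV _ hηtV) (hV _ hutV) (hVab _ hηtV)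
      (hVab _ hutV), neg_add_cancel]

end GalerkinCurves

theorem energy_conservation_conservative_galerkin_periodic_general
    (a b T : ℝ)
    (Vp : Submodule ℝ (ℝ → ℝ))
    (hVfin : FiniteDimensional ℝ Vp)
    (hVC1 : ∀ f ∈ Vp, ContDiff ℝ 1 f)
    (hVper : ∀ f ∈ Vp, f a = f b)
    (Pp : (ℝ → ℝ) → (ℝ → ℝ))
    (hPmem : ∀ f : ℝ → ℝ, Pp f ∈ Vp)
    (hPproj : ∀ f : ℝ → ℝ, ∀ χ ∈ Vp,
      (∫ x in a..b, Pp f x * χ x) = ∫ x in a..b, f x * χ x)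
    (ηh uh : ℝ → ℝ → ℝ)
    (hηmem : ∀ t : ℝ, ηh t ∈ Vp) (humem : ∀ t : ℝ, uh t ∈ Vp)
    (hηC1 : ∀ x : ℝ, ContDiff ℝ 1 (fun t => ηh t x))
    (huC1 : ∀ x : ℝ, ContDiff ℝ 1 (fun t => uh t x))
    (hηxC1 : ∀ x : ℝ, ContDiff ℝ 1 (fun t => Pp (fun y => deriv (ηh t) y) x))
    (huxC1 : ∀ x : ℝ, ContDiff ℝ 1 (fun t => Pp (fun y => deriv (uh t) y) x))
    (heq1 : ∀ t ∈ Set.Icc (0 : ℝ) T, ∀ χ ∈ Vp,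
      (∫ x in a..b, deriv (fun s => ηh s x) t * χ x)
          + 1 / 6 * ∫ x in a..b,
              deriv (fun s => Pp (fun y => deriv (ηh s) y) x) t * deriv χ x
        = ∫ x in a..b, Pp (fun y => (1 + ηh t y) * uh t y) x * deriv χ x)
    (heq2 : ∀ t ∈ Set.Icc (0 : ℝ) T, ∀ ψ ∈ Vp,
      (∫ x in a..b, deriv (fun s => uh s x) t * ψ x)
          + 1 / 6 * ∫ x in a..b,
              deriv (fun s => Pp (fun y => deriv (uh s) y) x) t * deriv ψ x
        = 1 / 2 * (∫ x in a..b, Pp (fun y => uh t y ^ 2) x * deriv ψ x)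
            + ∫ x in a..b, Pp (ηh t) x * deriv ψ x) :
    ∀ t₁ ∈ Set.Icc (0 : ℝ) T, ∀ t₂ ∈ Set.Icc (0 : ℝ) T,
      (1 / 2) * (∫ x in a..b, (ηh t₁ x ^ 2 + (1 + ηh t₁ x) * uh t₁ x ^ 2))
        = (1 / 2) * ∫ x in a..b, (ηh t₂ x ^ 2 + (1 + ηh t₂ x) * uh t₂ x ^ 2) := by
  have := hVfin
  have hVcont : ∀ f ∈ Vp, Continuous f := fun f hf => (hVC1 f hf).continuous
  have hstationary : ∀ t ∈ Icc (0 : ℝ) T, HasDerivAt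
      (fun τ => ∫ x in a..b, (ηh τ x ^ 2 + (1 + ηh τ x) * uh τ x ^ 2)) 0 t := by
    intro t ht
    have hηt := fun x => ((hηC1 x).differentiable one_ne_zero t).hasDerivAt
    have hut := fun x => ((huC1 x).differentiable one_ne_zero t).hasDerivAt
    have hDη := fun x => ((hηxC1 x).differentiable one_ne_zero t).hasDerivAt
    have hDu := fun x => ((huxC1 x).differentiable one_ne_zero t).hasDerivAt
    have hηtV := Vp.mem_of_hasDerivAt_apply hηmem hηt
    have hutV := Vp.mem_of_hasDerivAt_apply humem hut
    have hrate := bilinForm_energy_rate_eq_zero (l2Form a b hVcont) (derivForm a b hVC1)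
      (l2Form_comm hVcont) (derivForm_antisymm hVC1 hVper)
      (ηt := ⟨_, hηtV⟩) (ut := ⟨_, hutV⟩) (A := ⟨_, hPmem (ηh t)⟩) (B := ⟨_, hPmem _⟩)
      (S := ⟨_, hPmem _⟩) (Dη := ⟨_, Vp.mem_of_hasDerivAt_apply (fun s => hPmem _) hDη⟩)
      (Du := ⟨_, Vp.mem_of_hasDerivAt_apply (fun s => hPmem _) hDu⟩)
      (fun χ => heq1 t ht χ χ.2) (fun ψ => heq2 t ht ψ ψ.2)
      (integral_timeDeriv_proj_deriv_mul_add_eq_zero hVC1 hVper hPmem hPproj hηmem humem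
        hηt hut hDη hDu)
    simp only [l2Form, intervalIntegralMulForm, LinearMap.mk₂_apply, Submodule.subtype_apply,
      hPproj _ _ hηtV, hPproj _ _ hutV] at hrate
    refine (hasDerivAt_intervalIntegral_energy hVcont hηmem humem hηt hut).congr_deriv ?_
    linarith
  intro t₁ ht₁ t₂ ht₂
  have hconst := constant_of_has_deriv_right_zero
    (fun τ hτ => (hstationary τ hτ).continuousAt.continuousWithinAt)
    fun τ hτ => (hstationary τ (Ico_subset_Icc_self hτ)).hasDerivWithinAt
  rw [hconst t₁ ht₁, hconst t₂ ht₂]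

/-- Conservation of the semidiscrete energy `E(t) = (1/2) ∫_a^b ( ηh² + (1+ηh) uh² ) dx`
for the modified (conservative) Galerkin semidiscretisation of the nondimensional
BBM-BBM system with periodic boundary conditions. Here `Pp` is the `L²(a,b)`
orthogonal projection onto the finite-dimensional subspace `Vp ⊆ C¹` whose elements
take equal values at the endpoints. -/
theorem energy_conservation_conservative_galerkin_periodic
    (a b T : ℝ) (hab : a < b)
    (Vp : Submodule ℝ (ℝ → ℝ))
    (hVfin : FiniteDimensional ℝ Vp)
    (hVC1 : ∀ f ∈ Vp, ContDiff ℝ 1 f)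
    (hVper : ∀ f ∈ Vp, f a = f b)
    (Pp : (ℝ → ℝ) → (ℝ → ℝ))
    (hPmem : ∀ f : ℝ → ℝ, Pp f ∈ Vp)
    (hPproj : ∀ f : ℝ → ℝ, ∀ χ ∈ Vp,
      (∫ x in a..b, Pp f x * χ x) = ∫ x in a..b, f x * χ x)
    (ηh uh : ℝ → ℝ → ℝ)
    (hηmem : ∀ t : ℝ, ηh t ∈ Vp) (humem : ∀ t : ℝ, uh t ∈ Vp)
    (hηC1 : ∀ x : ℝ, ContDiff ℝ 1 (fun t => ηh t x))
    (huC1 : ∀ x : ℝ, ContDiff ℝ 1 (fun t => uh t x))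
    (hηxC1 : ∀ x : ℝ, ContDiff ℝ 1 (fun t => Pp (fun y => deriv (ηh t) y) x))
    (huxC1 : ∀ x : ℝ, ContDiff ℝ 1 (fun t => Pp (fun y => deriv (uh t) y) x))
    (heq1 : ∀ t ∈ Set.Icc (0 : ℝ) T, ∀ χ ∈ Vp,
      (∫ x in a..b, deriv (fun s => ηh s x) t * χ x)
          + 1 / 6 * ∫ x in a..b,
              deriv (fun s => Pp (fun y => deriv (ηh s) y) x) t * deriv χ x
        = ∫ x in a..b, Pp (fun y => (1 + ηh t y) * uh t y) x * deriv χ x)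
    (heq2 : ∀ t ∈ Set.Icc (0 : ℝ) T, ∀ ψ ∈ Vp,
      (∫ x in a..b, deriv (fun s => uh s x) t * ψ x)
          + 1 / 6 * ∫ x in a..b,
              deriv (fun s => Pp (fun y => deriv (uh s) y) x) t * deriv ψ x
        = 1 / 2 * (∫ x in a..b, Pp (fun y => uh t y ^ 2) x * deriv ψ x)
            + ∫ x in a..b, Pp (ηh t) x * deriv ψ x) :
    ∀ t₁ ∈ Set.Icc (0 : ℝ) T, ∀ t₂ ∈ Set.Icc (0 : ℝ) T,
      (1 / 2) * (∫ x in a..b, (ηh t₁ x ^ 2 + (1 + ηh t₁ x) * uh t₁ x ^ 2))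
        = (1 / 2) * ∫ x in a..b, (ηh t₂ x ^ 2 + (1 + ηh t₂ x) * uh t₂ x ^ 2) :=
  energy_conservation_conservative_galerkin_periodic_general a b T Vp hVfin hVC1 hVper Pp hPmem
    hPproj ηh uh hηmem humem hηC1 huC1 hηxC1 huxC1 heq1 heq2
end
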